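/- arXiv:2404.04534 — 9 statements merged into one kernel-verified Lean document; each statement's English description precedes it below -/
import Mathlib

section
/- Suppose λ > 0 and let π be any optimal policy (maximizer of J). Then within each group, the selection probability is non-decreasing in qualification: for any group c and qualifications y > y' with p(y,c) > 0 and p(y',c) > 0, one has π(c,y) ≥ π(c,y'). -/
/-!
Static setting: `Y` is a finite set of nonzero real qualifications; the two groups
`A`/`B` are encoded as `true`/`false`; `p c y` is the joint pmf on group × qualification.
-/

open Finset Filter Topology
open scoped Classical

noncomputable section

/-- Marginal probability of group `c`. -/
def pG (Y : Finset ℝ) (p : Bool → ℝ → ℝ) (c : Bool) : ℝ := ∑ y ∈ Y, p c y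

/-- Conditional pmf `p(y|c)`. -/
def pCond (Y : Finset ℝ) (p : Bool → ℝ → ℝ) (c : Bool) (y : ℝ) : ℝ := p c y / pG Y p c

/-- `p` is a pmf on `{A,B} × Y`, with positive group marginals, and all
qualifications in `Y` are nonzero. -/
def IsPMF (Y : Finset ℝ) (p : Bool → ℝ → ℝ) : Prop :=
  (∀ y ∈ Y, y ≠ 0) ∧ (∀ c, ∀ y ∈ Y, 0 ≤ p c y) ∧
    (∑ c : Bool, ∑ y ∈ Y, p c y) = 1 ∧ (∀ c, 0 < pG Y p c)

/-- A policy assigns selection probabilities in `[0,1]`. -/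
def Admissible (Y : Finset ℝ) (π : Bool → ℝ → ℝ) : Prop :=
  ∀ c, ∀ y ∈ Y, 0 ≤ π c y ∧ π c y ≤ 1

/-- Institution utility `U(π) = ∑ p(c,y)·y·π(c,y)`. -/
def util (Y : Finset ℝ) (p π : Bool → ℝ → ℝ) : ℝ :=
  ∑ c : Bool, ∑ y ∈ Y, p c y * y * π c y

/-- Selection rate of group `c`. -/
def selRate (Y : Finset ℝ) (p π : Bool → ℝ → ℝ) (c : Bool) : ℝ :=
  ∑ y ∈ Y, pCond Y p c y * π c y

/-- Disparity `Δ(π)`. -/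
def disp (Y : Finset ℝ) (p π : Bool → ℝ → ℝ) : ℝ :=
  |selRate Y p π true - selRate Y p π false|

/-- Penalized objective `J(π) = U(π) − λ·g(Δ(π))`. -/
def obj (Y : Finset ℝ) (p : Bool → ℝ → ℝ) (g : ℝ → ℝ) (lam : ℝ) (π : Bool → ℝ → ℝ) : ℝ :=
  util Y p π - lam * g (disp Y p π)

/-- Optimal policy: admissible maximizer of `J`. -/
def IsOptimal (Y : Finset ℝ) (p : Bool → ℝ → ℝ) (g : ℝ → ℝ) (lam : ℝ)
    (π : Bool → ℝ → ℝ) : Prop :=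
  Admissible Y π ∧ ∀ π', Admissible Y π' → obj Y p g lam π' ≤ obj Y p g lam π

/-- `g` is nondecreasing, nonnegative, convex on `[0,∞)` with `g 0 = 0`. -/
def AdmissiblePenalty (g : ℝ → ℝ) : Prop :=
  g 0 = 0 ∧ MonotoneOn g (Set.Ici 0) ∧ ConvexOn ℝ (Set.Ici 0) g ∧
    ∀ x ∈ Set.Ici (0 : ℝ), 0 ≤ g x

/-- `Pr(Y > 0 | c)`. -/
def posRate (Y : Finset ℝ) (p : Bool → ℝ → ℝ) (c : Bool) : ℝ :=
  ∑ y ∈ Y.filter (fun y => 0 < y), pCond Y p c y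

/-- `Δ_UM = Pr(Y>0|A) − Pr(Y>0|B)`. -/
def dUM (Y : Finset ℝ) (p : Bool → ℝ → ℝ) : ℝ := posRate Y p true - posRate Y p false

/-- `E[Y₊] = ∑_{c, y>0} p(c,y)·y`, the unconstrained maximal utility. -/
def eyPos (Y : Finset ℝ) (p : Bool → ℝ → ℝ) : ℝ :=
  ∑ c : Bool, ∑ y ∈ Y.filter (fun y => 0 < y), p c y * y

/-- The index set `𝒯_e`. -/
def TE (Y : Finset ℝ) (p : Bool → ℝ → ℝ) : Finset (ℝ × Bool) :=
  (Y ×ˢ (Finset.univ : Finset Bool)).filter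
    (fun yc => (yc.2 = true ∧ 0 < yc.1 ∧ 0 < pCond Y p true yc.1) ∨
               (yc.2 = false ∧ yc.1 < 0 ∧ 0 < pCond Y p false yc.1))

/-!
Exchange argument. If `π c y < π c y'` for some `y' < y` in the support of group `c`, raise
`π c y` by `t · p c y'` and lower `π c y'` by `t · p c y`. Both selection rates, hence the
disparity and the penalty, are unchanged, while the utility grows by `t · p c y · p c y' · (y - y')`;
for a small enough `t > 0` the policy stays admissible, contradicting optimality.
-/

theorem Finset.sum_mul_single_sub_single {α R : Type*} [DecidableEq α] [CommRing R]
    {s : Finset α} {i j : α} (hi : i ∈ s) (hj : j ∈ s) (w : α → R) (a b : R) :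
    ∑ x ∈ s, w x * (Pi.single i a - Pi.single j b : α → R) x = w i * a - w j * b := by
  simp [Pi.single_apply, mul_sub, sum_sub_distrib, hi, hj]

section Exchange

variable (Y : Finset ℝ) (p : Bool → ℝ → ℝ)

theorem util_add_smul (π d : Bool → ℝ → ℝ) (t : ℝ) :
    util Y p (π + t • d) = util Y p π + t * util Y p d := by
  simp only [util, Pi.add_apply, Pi.smul_apply, smul_eq_mul, mul_add, sum_add_distrib, mul_sum]
  congr 1
  exact sum_congr rfl fun _ _ => sum_congr rfl fun _ _ => by ring

theorem selRate_add_smul (π d : Bool → ℝ → ℝ) (t : ℝ) (c : Bool) :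
    selRate Y p (π + t • d) c = selRate Y p π c + t * selRate Y p d c := by
  simp only [selRate, Pi.add_apply, Pi.smul_apply, smul_eq_mul, mul_add, sum_add_distrib, mul_sum]
  congr 1
  exact sum_congr rfl fun _ _ => by ring

theorem util_single (c : Bool) (f : ℝ → ℝ) :
    util Y p (Pi.single c f) = ∑ z ∈ Y, p c z * z * f z := by
  rw [util, Fintype.sum_eq_single c fun c' hc => by simp [hc]]
  simp

def exchange (c : Bool) (y y' : ℝ) : Bool → ℝ → ℝ :=
  Pi.single c (Pi.single y (p c y') - Pi.single y' (p c y))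

variable {Y} {c : Bool} {y y' : ℝ}

theorem util_exchange (hy : y ∈ Y) (hy' : y' ∈ Y) :
    util Y p (exchange p c y y') = p c y * p c y' * (y - y') := by
  rw [exchange, util_single, sum_mul_single_sub_single hy hy']
  ring

theorem selRate_exchange (hy : y ∈ Y) (hy' : y' ∈ Y) (c' : Bool) :
    selRate Y p (exchange p c y y') c' = 0 := by
  by_cases hc : c' = c
  · subst hc
    rw [selRate, exchange, Pi.single_eq_same, sum_mul_single_sub_single hy hy', pCond, pCond]
    ring
  · simp [selRate, exchange, hc]

theorem obj_add_smul_exchange (g : ℝ → ℝ) (lam : ℝ) (π : Bool → ℝ → ℝ) (t : ℝ)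
    (hy : y ∈ Y) (hy' : y' ∈ Y) :
    obj Y p g lam (π + t • exchange p c y y') =
      obj Y p g lam π + t * (p c y * p c y' * (y - y')) := by
  have hdisp : disp Y p (π + t • exchange p c y y') = disp Y p π := by
    simp only [disp, selRate_add_smul, selRate_exchange p hy hy', mul_zero, add_zero]
  rw [obj, obj, hdisp, util_add_smul, util_exchange p hy hy']
  ring

/-- With this step size the values `π c y` and `π c y'` move towards each other and meet. -/
theorem admissible_add_smul_exchange {π : Bool → ℝ → ℝ} (hπ : Admissible Y π)
    (hy : y ∈ Y) (hy' : y' ∈ Y) (hlt : π c y < π c y') (hpy : 0 < p c y) (hpy' : 0 < p c y') :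
    Admissible Y (π + ((π c y' - π c y) / (p c y + p c y')) • exchange p c y y') := by
  set t := (π c y' - π c y) / (p c y + p c y')
  have hne : y ≠ y' := fun h => hlt.ne (by rw [h])
  have ht : 0 ≤ t := div_nonneg (by linarith) (by linarith)
  have hsum : t * p c y + t * p c y' = π c y' - π c y := by
    rw [← mul_add, div_mul_cancel₀ _ (by linarith)]
  have hty := mul_nonneg ht hpy.le
  have hty' := mul_nonneg ht hpy'.le
  have hy0 := (hπ c y hy).1
  have hy'1 := (hπ c y' hy').2
  intro c' z hz
  by_cases hc : c' = c
  · subst hc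
    by_cases hzy : z = y
    · subst hzy
      simp only [exchange, Pi.add_apply, Pi.smul_apply, Pi.single_eq_same, Pi.sub_apply,
        Pi.single_eq_of_ne hne, smul_eq_mul]
      constructor <;> linarith
    · by_cases hzy' : z = y'
      · subst hzy'
        simp only [exchange, Pi.add_apply, Pi.smul_apply, Pi.single_eq_same, Pi.sub_apply,
          Pi.single_eq_of_ne hzy, smul_eq_mul]
        constructor <;> linarith
      · simpa [exchange, hzy, hzy'] using hπ c' z hz
  · simpa [exchange, hc] using hπ c' z hz

end Exchange

theorem stmt_0_general (Y : Finset ℝ) (p : Bool → ℝ → ℝ)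
    (g : ℝ → ℝ) (lam : ℝ)
    (π : Bool → ℝ → ℝ) (hopt : IsOptimal Y p g lam π) :
    ∀ c : Bool, ∀ y ∈ Y, ∀ y' ∈ Y, y' < y → 0 < p c y → 0 < p c y' →
      π c y' ≤ π c y := by
  intro c y hy y' hy' hlt hpy hpy'
  by_contra! hdec
  set t := (π c y' - π c y) / (p c y + p c y')
  have ht : 0 < t := div_pos (by linarith) (by linarith)
  have hgain : 0 < t * (p c y * p c y' * (y - y')) := by
    have := sub_pos.2 hlt
    positivity
  have hle := hopt.2 _ (admissible_add_smul_exchange p hopt.1 hy hy' hdec hpy hpy')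
  rw [obj_add_smul_exchange p g lam π t hy hy'] at hle
  linarith

/-- For `λ > 0`, any optimal policy has selection probability
non-decreasing in qualification within each group (on the support of `p`). -/
theorem stmt_0 (Y : Finset ℝ) (p : Bool → ℝ → ℝ) (hp : IsPMF Y p)
    (g : ℝ → ℝ) (hg : AdmissiblePenalty g) (lam : ℝ) (hlam : 0 < lam)
    (π : Bool → ℝ → ℝ) (hopt : IsOptimal Y p g lam π) :
    ∀ c : Bool, ∀ y ∈ Y, ∀ y' ∈ Y, y' < y → 0 < p c y → 0 < p c y' →
      π c y' ≤ π c y :=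
  stmt_0_general Y p g lam π hopt
end
end

section
/- Suppose λ > 0 and let π be any optimal policy (maximizer of J). Then within each group at most one qualification level has a fractional selection probability: for every group c there exists y' ∈ 𝒴 such that for every y ≠ y' with p(y,c) > 0, one has π(c,y) ∈ {0,1}. -/
/-!
Static setting: `Y` is a finite set of nonzero real qualifications; the two groups
`A`/`B` are encoded as `true`/`false`; `p c y` is the joint pmf on group × qualification.
-/

open Finset Filter Topology
open scoped Classical

noncomputable section

/-!
If an optimal policy selected two distinct levels `lo < hi` of the same group with fractional
probabilities, one could move probability mass `t > 0` of that group from `lo` to `hi`: raise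
`π c hi` by `t / p c hi` and lower `π c lo` by `t / p c lo`. Both selection rates, hence the
disparity and the penalty, are unchanged, while the utility grows by `t * (hi - lo) > 0`.
-/

def transfer (p π : Bool → ℝ → ℝ) (c : Bool) (hi lo t : ℝ) : Bool → ℝ → ℝ :=
  fun c' y => π c' y +
    if c' = c then (if y = hi then t / p c hi else 0) - (if y = lo then t / p c lo else 0)
    else 0

section Transfer

variable {Y : Finset ℝ} {p π : Bool → ℝ → ℝ} {c : Bool} {hi lo t : ℝ}

lemma sum_mul_transfer (hhi : hi ∈ Y) (hlo : lo ∈ Y) (w : ℝ → ℝ) (c' : Bool) :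
    ∑ y ∈ Y, w y * transfer p π c hi lo t c' y =
      ∑ y ∈ Y, w y * π c' y +
        if c' = c then w hi * (t / p c hi) - w lo * (t / p c lo) else 0 := by
  split_ifs with hc
  · simp only [transfer, hc, if_true, mul_add, mul_sub, mul_ite, mul_zero, sum_add_distrib,
      sum_sub_distrib, sum_ite_eq', hhi, hlo]
  · simp [transfer, hc]

lemma selRate_transfer (hhi : hi ∈ Y) (hlo : lo ∈ Y) (phi : p c hi ≠ 0) (plo : p c lo ≠ 0)
    (c' : Bool) : selRate Y p (transfer p π c hi lo t) c' = selRate Y p π c' := by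
  rw [selRate, selRate, sum_mul_transfer hhi hlo]
  split_ifs with hc
  · subst hc
    rw [pCond, pCond, div_mul_div_cancel₀' phi, div_mul_div_cancel₀' plo, sub_self, add_zero]
  · rw [add_zero]

lemma util_transfer (hhi : hi ∈ Y) (hlo : lo ∈ Y) (phi : p c hi ≠ 0) (plo : p c lo ≠ 0) :
    util Y p (transfer p π c hi lo t) = util Y p π + t * (hi - lo) := by
  have gain : p c hi * hi * (t / p c hi) - p c lo * lo * (t / p c lo) = t * (hi - lo) := by
    field_simp
  simp only [util, sum_mul_transfer hhi hlo (fun y => p _ y * y), sum_add_distrib,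
    sum_ite_eq', mem_univ, if_true, gain]

lemma obj_transfer (hhi : hi ∈ Y) (hlo : lo ∈ Y) (phi : p c hi ≠ 0) (plo : p c lo ≠ 0)
    (g : ℝ → ℝ) (lam : ℝ) :
    obj Y p g lam (transfer p π c hi lo t) = obj Y p g lam π + t * (hi - lo) := by
  simp only [obj, disp, util_transfer hhi hlo phi plo, selRate_transfer hhi hlo phi plo]
  ring

lemma admissible_transfer (hπ : Admissible Y π) (hne : hi ≠ lo) (phi : 0 < p c hi)
    (plo : 0 < p c lo) (ht : 0 ≤ t) (ht_hi : t ≤ (1 - π c hi) * p c hi)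
    (ht_lo : t ≤ π c lo * p c lo) : Admissible Y (transfer p π c hi lo t) := by
  have up : 0 ≤ t / p c hi ∧ t / p c hi ≤ 1 - π c hi :=
    ⟨div_nonneg ht phi.le, (div_le_iff₀ phi).mpr ht_hi⟩
  have down : 0 ≤ t / p c lo ∧ t / p c lo ≤ π c lo :=
    ⟨div_nonneg ht plo.le, (div_le_iff₀ plo).mpr ht_lo⟩
  intro c' y hy
  have := hπ c' y hy
  unfold transfer
  split_ifs with hc h₁ h₂ h₂ <;> subst_vars
  · exact absurd rfl hne
  all_goals constructor <;> linarith

end Transfer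

lemma Admissible.mem_Ioo {Y : Finset ℝ} {π : Bool → ℝ → ℝ} (hπ : Admissible Y π) {c : Bool}
    {y : ℝ} (hy : y ∈ Y) (h : ¬(π c y = 0 ∨ π c y = 1)) : π c y ∈ Set.Ioo 0 1 := by
  obtain ⟨h0, h1⟩ := not_or.mp h
  exact ⟨(hπ c y hy).1.lt_of_ne' h0, (hπ c y hy).2.lt_of_ne h1⟩

lemma IsOptimal.eq_of_mem_Ioo {Y : Finset ℝ} {p : Bool → ℝ → ℝ} {g : ℝ → ℝ} {lam : ℝ}
    {π : Bool → ℝ → ℝ} (hopt : IsOptimal Y p g lam π) {c : Bool} {y₁ y₂ : ℝ} (h₁ : y₁ ∈ Y)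
    (h₂ : y₂ ∈ Y) (hp₁ : 0 < p c y₁) (hp₂ : 0 < p c y₂) (hπ₁ : π c y₁ ∈ Set.Ioo 0 1)
    (hπ₂ : π c y₂ ∈ Set.Ioo 0 1) : y₁ = y₂ := by
  by_contra hne
  wlog hlt : y₂ < y₁ generalizing y₁ y₂
  · exact this h₂ h₁ hp₂ hp₁ hπ₂ hπ₁ (Ne.symm hne) (lt_of_le_of_ne (not_lt.mp hlt) hne)
  set t := min ((1 - π c y₁) * p c y₁) (π c y₂ * p c y₂)
  have ht : 0 < t := lt_min (mul_pos (sub_pos.mpr hπ₁.2) hp₁) (mul_pos hπ₂.1 hp₂)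
  have hadm := admissible_transfer hopt.1 hne hp₁ hp₂ ht.le (min_le_left _ _) (min_le_right _ _)
  have hle := hopt.2 _ hadm
  rw [obj_transfer h₁ h₂ hp₁.ne' hp₂.ne'] at hle
  linarith [mul_pos ht (sub_pos.mpr hlt)]

theorem stmt_1_general (Y : Finset ℝ) (p : Bool → ℝ → ℝ) (hp : IsPMF Y p)
    (g : ℝ → ℝ) (lam : ℝ)
    (π : Bool → ℝ → ℝ) (hopt : IsOptimal Y p g lam π) :
    ∀ c : Bool, ∃ y' ∈ Y, ∀ y ∈ Y, y ≠ y' → 0 < p c y →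
      π c y = 0 ∨ π c y = 1 := by
  intro c
  by_cases hfrac : ∃ y' ∈ Y, 0 < p c y' ∧ π c y' ∈ Set.Ioo 0 1
  · obtain ⟨y', hy', hp', hπ'⟩ := hfrac
    refine ⟨y', hy', fun y hy hne hpy => ?_⟩
    by_contra h
    exact hne (hopt.eq_of_mem_Ioo hy hy' hpy hp' (hopt.1.mem_Ioo hy h) hπ')
  · obtain ⟨y', hy'⟩ := nonempty_of_sum_ne_zero (hp.2.2.2 c).ne'
    refine ⟨y', hy', fun y hy _ hpy => ?_⟩
    by_contra h
    exact hfrac ⟨y, hy, hpy, hopt.1.mem_Ioo hy h⟩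

/-- For `λ > 0`, under any optimal policy, within each group at most
one qualification level has a fractional selection probability. -/
theorem stmt_1 (Y : Finset ℝ) (p : Bool → ℝ → ℝ) (hp : IsPMF Y p)
    (g : ℝ → ℝ) (hg : AdmissiblePenalty g) (lam : ℝ) (hlam : 0 < lam)
    (π : Bool → ℝ → ℝ) (hopt : IsOptimal Y p g lam π) :
    ∀ c : Bool, ∃ y' ∈ Y, ∀ y ∈ Y, y ≠ y' → 0 < p c y →
      π c y = 0 ∨ π c y = 1 :=
  stmt_1_general Y p hp g lam π hopt
end
end

section
/- Suppose Pr(Y>0|A) > Pr(Y>0|B). Then for any λ ≥ 0, any admissible penalty function g, and any optimal policy π (maximizer of J): negatively qualified individuals of group A are never selected and positively qualified individuals of group B are always selected, i.e., for every y < 0 with p(y,A) > 0 one has π(A,y) = 0, and for every y > 0 with p(y,B) > 0 one has π(B,y) = 1. -/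
/-!
Static setting: `Y` is a finite set of nonzero real qualifications; the two groups
`A`/`B` are encoded as `true`/`false`; `p c y` is the joint pmf on group × qualification.
-/

open Finset Filter Topology
open scoped Classical

noncomputable section

/-!
Call `S_A − S_B` the gap. An optimal `π` admits no admissible `τ` with larger utility and
smaller gap. If the gap of `π` is positive, moving slightly from `π` towards `τ` raises utility
and brings the gap closer to `0`. Otherwise, mix `τ` with the greedy policy (select exactly
`Y > 0`); it has maximal utility and gap `Pr(Y>0|A) − Pr(Y>0|B) > 0`, so the right mixture
has the same gap as `π` and more utility. In both cases disparity does not grow, but utility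
does. Deselecting a negatively qualified member of `A`, or selecting a positively qualified
member of `B`, would be such a `τ`.
-/

def gap (Y : Finset ℝ) (p π : Bool → ℝ → ℝ) : ℝ :=
  selRate Y p π true - selRate Y p π false

def greedy : Bool → ℝ → ℝ := fun _ y => if 0 < y then 1 else 0

lemma disp_eq_abs_gap (Y : Finset ℝ) (p π : Bool → ℝ → ℝ) : disp Y p π = |gap Y p π| := rfl

section Linearity

variable (Y : Finset ℝ) (p : Bool → ℝ → ℝ)

@[simp]
lemma util_add (π σ : Bool → ℝ → ℝ) : util Y p (π + σ) = util Y p π + util Y p σ := by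
  simp only [util, Pi.add_apply, mul_add, Finset.sum_add_distrib]

@[simp]
lemma util_smul (r : ℝ) (π : Bool → ℝ → ℝ) : util Y p (r • π) = r * util Y p π := by
  simp only [util, Pi.smul_apply, smul_eq_mul, Finset.mul_sum]
  congr! 2 with c - y -
  ring

@[simp]
lemma selRate_add (π σ : Bool → ℝ → ℝ) (c : Bool) :
    selRate Y p (π + σ) c = selRate Y p π c + selRate Y p σ c := by
  simp only [selRate, Pi.add_apply, mul_add, Finset.sum_add_distrib]

@[simp]
lemma selRate_smul (r : ℝ) (π : Bool → ℝ → ℝ) (c : Bool) :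
    selRate Y p (r • π) c = r * selRate Y p π c := by
  simp only [selRate, Pi.smul_apply, smul_eq_mul, Finset.mul_sum]
  congr! 1 with y -
  ring

@[simp]
lemma gap_add (π σ : Bool → ℝ → ℝ) : gap Y p (π + σ) = gap Y p π + gap Y p σ := by
  simp only [gap, selRate_add]; ring

@[simp]
lemma gap_smul (r : ℝ) (π : Bool → ℝ → ℝ) : gap Y p (r • π) = r * gap Y p π := by
  simp only [gap, selRate_smul]; ring

variable {Y} in
lemma util_single_s3 {y₀ : ℝ} (hy₀ : y₀ ∈ Y) (c₀ : Bool) (t : ℝ) :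
    util Y p (Pi.single c₀ (Pi.single y₀ t)) = p c₀ y₀ * y₀ * t := by
  cases c₀ <;> simp [util, Pi.single_apply, hy₀]

variable {Y} in
lemma selRate_single {y₀ : ℝ} (hy₀ : y₀ ∈ Y) (c₀ : Bool) (t : ℝ) (c : Bool) :
    selRate Y p (Pi.single c₀ (Pi.single y₀ t)) c = if c = c₀ then pCond Y p c₀ y₀ * t else 0 := by
  by_cases hc : c = c₀
  · subst hc; simp [selRate, Pi.single_apply, hy₀]
  · simp [selRate, hc]

lemma selRate_greedy (c : Bool) : selRate Y p greedy c = posRate Y p c := by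
  simp only [selRate, posRate, greedy, Finset.sum_filter, mul_ite, mul_one, mul_zero]

lemma gap_greedy : gap Y p greedy = dUM Y p := by
  simp only [gap, dUM, selRate_greedy]

end Linearity

lemma exists_convex_comb_abs_le {d dσ dτ : ℝ} (hσ : 0 < dσ) (hτ : dτ < d) :
    ∃ r s t : ℝ, 0 ≤ r ∧ 0 ≤ s ∧ 0 < t ∧ r + s + t = 1 ∧
      |r * d + s * dσ + t * dτ| ≤ |d| := by
  rcases lt_or_ge 0 d with hd | hd
  · -- move from `d` towards `dτ`, stopping at `0` if the segment crosses it
    set t := min 1 (d / (d - dτ))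
    have ht : 0 < t := lt_min one_pos (div_pos hd (sub_pos.2 hτ))
    have htd : t * (d - dτ) ≤ d := (le_div_iff₀ (sub_pos.2 hτ)).1 (min_le_right _ _)
    refine ⟨1 - t, 0, t, sub_nonneg.2 (min_le_left _ _), le_rfl, ht, by ring, ?_⟩
    rw [abs_of_pos hd, abs_le]
    constructor <;> nlinarith
  · -- `dσ > 0 ≥ d > dτ`: the point `d` is a convex combination of `dσ` and `dτ`
    have h : 0 < dσ - dτ := by linarith
    refine ⟨0, (d - dτ) / (dσ - dτ), (dσ - d) / (dσ - dτ), le_rfl,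
      (div_pos (by linarith) h).le, div_pos (by linarith) h, by field_simp; ring, le_of_eq ?_⟩
    congr 1
    field_simp
    ring

lemma Admissible.convex_comb {Y : Finset ℝ} {π σ τ : Bool → ℝ → ℝ} (hπ : Admissible Y π)
    (hσ : Admissible Y σ) (hτ : Admissible Y τ) {r s t : ℝ} (hr : 0 ≤ r) (hs : 0 ≤ s)
    (ht : 0 ≤ t) (hrst : r + s + t = 1) : Admissible Y (r • π + s • σ + t • τ) := by
  intro c y hy
  obtain ⟨hπ₀, hπ₁⟩ := hπ c y hy
  obtain ⟨hσ₀, hσ₁⟩ := hσ c y hy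
  obtain ⟨hτ₀, hτ₁⟩ := hτ c y hy
  simp only [Pi.add_apply, Pi.smul_apply, smul_eq_mul]
  constructor
  · positivity
  · nlinarith [mul_le_mul_of_nonneg_left hπ₁ hr, mul_le_mul_of_nonneg_left hσ₁ hs,
      mul_le_mul_of_nonneg_left hτ₁ ht]

lemma Admissible.add_single {Y : Finset ℝ} {π : Bool → ℝ → ℝ} (hπ : Admissible Y π)
    (c₀ : Bool) (y₀ : ℝ) {t : ℝ} (h₀ : 0 ≤ π c₀ y₀ + t) (h₁ : π c₀ y₀ + t ≤ 1) :
    Admissible Y (π + Pi.single c₀ (Pi.single y₀ t)) := by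
  intro c y hy
  by_cases h : c = c₀ ∧ y = y₀
  · obtain ⟨rfl, rfl⟩ := h
    simpa using ⟨h₀, h₁⟩
  · have : (Pi.single c₀ (Pi.single y₀ t) : Bool → ℝ → ℝ) c y = 0 := by
      by_cases hc : c = c₀
      · subst hc; simp [show y ≠ y₀ from fun hy => h ⟨rfl, hy⟩]
      · simp [hc]
    simpa [this] using hπ c y hy

lemma admissible_greedy (Y : Finset ℝ) : Admissible Y greedy := by
  intro c y _
  unfold greedy
  split_ifs <;> norm_num

lemma util_le_util_greedy {Y : Finset ℝ} {p π : Bool → ℝ → ℝ} (hp : ∀ c, ∀ y ∈ Y, 0 ≤ p c y)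
    (hπ : Admissible Y π) : util Y p π ≤ util Y p greedy := by
  refine Finset.sum_le_sum fun c _ => Finset.sum_le_sum fun y hy => ?_
  obtain ⟨h₀, h₁⟩ := hπ c y hy
  have hpy := hp c y hy
  unfold greedy
  split_ifs with hy
  · nlinarith [mul_nonneg hpy hy.le]
  · nlinarith [mul_nonneg hpy h₀]

lemma pCond_pos {Y : Finset ℝ} {p : Bool → ℝ → ℝ} (hp : IsPMF Y p) {c : Bool} {y : ℝ}
    (hpy : 0 < p c y) : 0 < pCond Y p c y :=
  div_pos hpy (hp.2.2.2 c)

namespace IsOptimal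

variable {Y : Finset ℝ} {p : Bool → ℝ → ℝ} {g : ℝ → ℝ} {lam : ℝ} {π : Bool → ℝ → ℝ}

lemma util_le_of_disp_le (hopt : IsOptimal Y p g lam π) (hg : MonotoneOn g (Set.Ici 0))
    (hlam : 0 ≤ lam) {π' : Bool → ℝ → ℝ} (hπ' : Admissible Y π')
    (hd : disp Y p π' ≤ disp Y p π) : util Y p π' ≤ util Y p π := by
  have hJ := hopt.2 π' hπ'
  have hgd : g (disp Y p π') ≤ g (disp Y p π) :=
    hg (abs_nonneg (gap Y p π')) (abs_nonneg (gap Y p π)) hd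
  unfold obj at hJ
  nlinarith

lemma gap_le_of_util_lt (hopt : IsOptimal Y p g lam π) (hg : MonotoneOn g (Set.Ici 0))
    (hlam : 0 ≤ lam) {σ : Bool → ℝ → ℝ} (hσ : Admissible Y σ) (hσu : util Y p π ≤ util Y p σ)
    (hσg : 0 < gap Y p σ) {τ : Bool → ℝ → ℝ} (hτ : Admissible Y τ)
    (hτu : util Y p π < util Y p τ) : gap Y p π ≤ gap Y p τ := by
  by_contra! hτg
  obtain ⟨r, s, t, hr, hs, ht, hrst, hd⟩ := exists_convex_comb_abs_le hσg hτg
  have hmix := hopt.util_le_of_disp_le hg hlam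
    (hopt.1.convex_comb hσ hτ hr hs ht.le hrst)
    (by simpa only [disp_eq_abs_gap, gap_add, gap_smul] using hd)
  simp only [util_add, util_smul] at hmix
  obtain rfl : r = 1 - s - t := by linarith
  nlinarith [mul_le_mul_of_nonneg_left hσu hs, mul_lt_mul_of_pos_left hτu ht]

lemma gap_single_nonneg (hopt : IsOptimal Y p g lam π) (hp : ∀ c, ∀ y ∈ Y, 0 ≤ p c y)
    (hadv : posRate Y p false < posRate Y p true) (hg : MonotoneOn g (Set.Ici 0))
    (hlam : 0 ≤ lam) (c : Bool) {y : ℝ} (hy : y ∈ Y) {t : ℝ} (h₀ : 0 ≤ π c y + t)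
    (h₁ : π c y + t ≤ 1) (hu : 0 < p c y * y * t) :
    0 ≤ gap Y p (Pi.single c (Pi.single y t)) := by
  have h := hopt.gap_le_of_util_lt hg hlam (admissible_greedy Y) (util_le_util_greedy hp hopt.1)
    (by rwa [gap_greedy, dUM, sub_pos]) (hopt.1.add_single c y h₀ h₁)
    (by rw [util_add, util_single_s3 p hy]; linarith)
  rw [gap_add] at h
  linarith

end IsOptimal

/-- If `Pr(Y>0|A) > Pr(Y>0|B)`, then under any optimal policy,
negatively qualified members of group `A` are never selected and positively
qualified members of group `B` are always selected. -/
theorem stmt_3 (Y : Finset ℝ) (p : Bool → ℝ → ℝ) (hp : IsPMF Y p)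
    (hadv : posRate Y p false < posRate Y p true)
    (g : ℝ → ℝ) (hg : AdmissiblePenalty g) (lam : ℝ) (hlam : 0 ≤ lam)
    (π : Bool → ℝ → ℝ) (hopt : IsOptimal Y p g lam π) :
    (∀ y ∈ Y, y < 0 → 0 < p true y → π true y = 0) ∧
    (∀ y ∈ Y, 0 < y → 0 < p false y → π false y = 1) := by
  have hadm := hopt.1
  constructor
  · intro y hy hy₀ hpy
    by_contra hne
    have hπ : 0 < π true y := lt_of_le_of_ne (hadm true y hy).1 (Ne.symm hne)
    have h := hopt.gap_single_nonneg hp.2.1 hadv hg.2.1 hlam true hy (t := -π true y) (by simp)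
      (by linarith [(hadm true y hy).2]) (by nlinarith [mul_pos hpy hπ])
    simp only [gap, selRate_single p hy, ↓reduceIte, mul_neg, Bool.false_eq_true, sub_zero,
      Left.nonneg_neg_iff] at h
    nlinarith [pCond_pos hp hpy]
  · intro y hy hy₀ hpy
    by_contra hne
    have hπ : 0 < 1 - π false y := sub_pos.2 (lt_of_le_of_ne (hadm false y hy).2 hne)
    have h := hopt.gap_single_nonneg hp.2.1 hadv hg.2.1 hlam false hy (t := 1 - π false y)
      (by linarith [(hadm false y hy).1]) (by simp) (mul_pos (mul_pos hpy hy₀) hπ)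
    simp only [gap, selRate_single p hy, Bool.true_eq_false, ↓reduceIte, zero_sub,
      Left.nonneg_neg_iff] at h
    nlinarith [pCond_pos hp hpy]
end
end

section
/- (Full-satisfaction criterion.) Assume Δ_UM > 0. The penalty (g, λ) is fully satisfactory — i.e., at least one maximizer π of J satisfies Δ(π) = 0, equivalently the maximum of J over all policies equals the maximum of U(π) over policies constrained by S_A(π) = S_B(π) — if and only if β_s ≤ λ·g'_+(0), where g'_+(0) is the right derivative of g at 0, and β_s is defined as follows: let π* be any maximizer of U over policies with S_A = S_B, let 𝒯_s = {(y,A) : y > 0, p(y|A) > 0, π*(A,y) < 1} ∪ {(y,B) : y < 0, p(y|B) > 0, π*(B,y) > 0}, and set β_s = max_{(y,c) ∈ 𝒯_s} p(c)·|y| (this value does not depend on the chosen maximizer π*). -/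
/-!
Static setting: `Y` is a finite set of nonzero real qualifications; the two groups
`A`/`B` are encoded as `true`/`false`; `p c y` is the joint pmf on group × qualification.
-/

open Finset Filter Topology
open scoped Classical

noncomputable section

/-- The index set `𝒯_s`, relative to a parity-optimal policy `πs`. -/
def TS (Y : Finset ℝ) (p : Bool → ℝ → ℝ) (πs : Bool → ℝ → ℝ) : Finset (ℝ × Bool) :=
  (Y ×ˢ (Finset.univ : Finset Bool)).filter
    (fun yc => (yc.2 = true ∧ 0 < yc.1 ∧ 0 < pCond Y p true yc.1 ∧ πs true yc.1 < 1) ∨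
               (yc.2 = false ∧ yc.1 < 0 ∧ 0 < pCond Y p false yc.1 ∧ 0 < πs false yc.1))

/-!
If some maximizer of `J` has `Δ = 0`, the maximum of `J` is at most `U(πs)`. Moving `πs` by `t`
along a cell `(y, c) ∈ 𝒯_s` gains `p(c)|y| t` in utility at the price `λ g(t) = λ g'₊(0) t + o(t)`,
so `p(c)|y| ≤ λ g'₊(0)`.

Conversely, `β_s` is a Lagrange multiplier for the parity constraint: `πs` maximizes
`U - β_s (S_A - S_B)` cell by cell. A cell whose move widens the gap gains at most `β_s` by the
definition of `𝒯_s`; a cell whose move narrows it can be paired with a cell of `𝒯_s` into a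
parity-preserving move, which cannot beat `πs`. (`Δ_UM > 0` makes `𝒯_s` nonempty.) Hence
`U(π) ≤ U(πs) + β_s Δ(π) ≤ U(πs) + λ g(Δ(π))`, using `g(d) ≥ g'₊(0) d` for convex `g`.
-/

variable {Y : Finset ℝ} {p : Bool → ℝ → ℝ}

lemma IsPMF.pG_pos (hp : IsPMF Y p) (c : Bool) : 0 < pG Y p c := hp.2.2.2 c

lemma pCond_nonneg (hp : IsPMF Y p) {c : Bool} {y : ℝ} (hy : y ∈ Y) : 0 ≤ pCond Y p c y :=
  div_nonneg (hp.2.1 c y hy) (hp.pG_pos c).le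

lemma pG_mul_pCond (hp : IsPMF Y p) (c : Bool) (y : ℝ) : pG Y p c * pCond Y p c y = p c y :=
  mul_div_cancel₀ _ (hp.pG_pos c).ne'

def selGap (Y : Finset ℝ) (p π : Bool → ℝ → ℝ) : ℝ :=
  selRate Y p π true - selRate Y p π false

lemma isLinearMap_util : IsLinearMap ℝ (util Y p) where
  map_add π π' := by simp only [util, Pi.add_apply, mul_add, Finset.sum_add_distrib]
  map_smul t π := by
    simp only [util, Pi.smul_apply, smul_eq_mul, Finset.mul_sum]
    exact Finset.sum_congr rfl fun _ _ => Finset.sum_congr rfl fun _ _ => by ring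

lemma isLinearMap_selRate (c : Bool) : IsLinearMap ℝ (fun π => selRate Y p π c) where
  map_add π π' := by simp only [selRate, Pi.add_apply, mul_add, Finset.sum_add_distrib]
  map_smul t π := by
    simp only [selRate, Pi.smul_apply, smul_eq_mul, Finset.mul_sum]
    exact Finset.sum_congr rfl fun _ _ => by ring

lemma isLinearMap_selGap : IsLinearMap ℝ (selGap Y p) where
  map_add π π' := by
    simp only [selGap, (isLinearMap_selRate _).map_add]
    ring
  map_smul t π := by
    simp only [selGap, (isLinearMap_selRate _).map_smul, smul_eq_mul]
    ring

/-- Scaled by `p(y₀|c₀)⁻¹`, so that moving along it raises the selection rate of `c₀` at unit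
speed. -/
def rateDir (Y : Finset ℝ) (p : Bool → ℝ → ℝ) (c₀ : Bool) (y₀ : ℝ) : Bool → ℝ → ℝ :=
  Pi.single c₀ (Pi.single y₀ (pCond Y p c₀ y₀)⁻¹)

lemma rateDir_apply (c₀ : Bool) (y₀ : ℝ) (c : Bool) (y : ℝ) :
    rateDir Y p c₀ y₀ c y = if c = c₀ ∧ y = y₀ then (pCond Y p c₀ y₀)⁻¹ else 0 := by
  by_cases hc : c = c₀
  · subst hc; simp [rateDir, Pi.single_apply]
  · simp [rateDir, hc]

lemma selRate_rateDir {c₀ : Bool} {y₀ : ℝ} (hy₀ : y₀ ∈ Y) (hq : pCond Y p c₀ y₀ ≠ 0)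
    (c : Bool) : selRate Y p (rateDir Y p c₀ y₀) c = if c = c₀ then 1 else 0 := by
  by_cases hc : c = c₀
  · subst hc
    simp [selRate, rateDir, Pi.single_apply, hy₀, hq]
  · simp [selRate, rateDir, hc]

lemma selGap_rateDir_true {y₀ : ℝ} (hy₀ : y₀ ∈ Y) (hq : pCond Y p true y₀ ≠ 0) :
    selGap Y p (rateDir Y p true y₀) = 1 := by
  simp [selGap, selRate_rateDir hy₀ hq]

lemma selGap_rateDir_false {y₀ : ℝ} (hy₀ : y₀ ∈ Y) (hq : pCond Y p false y₀ ≠ 0) :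
    selGap Y p (rateDir Y p false y₀) = -1 := by
  simp [selGap, selRate_rateDir hy₀ hq]

lemma util_rateDir (hp : IsPMF Y p) {c₀ : Bool} {y₀ : ℝ} (hy₀ : y₀ ∈ Y)
    (hq : pCond Y p c₀ y₀ ≠ 0) : util Y p (rateDir Y p c₀ y₀) = pG Y p c₀ * y₀ := by
  have hcell : p c₀ y₀ * y₀ * (pCond Y p c₀ y₀)⁻¹ = pG Y p c₀ * y₀ := by
    rw [← pG_mul_pCond hp]; field_simp
  cases c₀ <;> simpa [util, rateDir, Pi.single_apply, hy₀] using hcell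

def IsFeasibleDir (Y : Finset ℝ) (π δ : Bool → ℝ → ℝ) : Prop :=
  ∀ c, ∀ y ∈ Y, (0 < δ c y → π c y < 1) ∧ (δ c y < 0 → 0 < π c y)

lemma IsFeasibleDir.add {π δ δ' : Bool → ℝ → ℝ} (h : IsFeasibleDir Y π δ)
    (h' : IsFeasibleDir Y π δ') : IsFeasibleDir Y π (δ + δ') := by
  intro c y hy
  obtain ⟨hup, hdown⟩ := h c y hy
  obtain ⟨hup', hdown'⟩ := h' c y hy
  simp only [Pi.add_apply]
  constructor
  · intro hpos
    rcases lt_or_ge 0 (δ c y) with hδ | hδ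
    exacts [hup hδ, hup' (by linarith)]
  · intro hneg
    rcases lt_or_ge (δ c y) 0 with hδ | hδ
    exacts [hdown hδ, hdown' (by linarith)]

lemma isFeasibleDir_rateDir (hp : IsPMF Y p) {π : Bool → ℝ → ℝ} {c₀ : Bool} {y₀ : ℝ}
    (h : π c₀ y₀ < 1) : IsFeasibleDir Y π (rateDir Y p c₀ y₀) := by
  intro c y hy
  rw [rateDir_apply]
  split_ifs with hcell
  · obtain ⟨rfl, rfl⟩ := hcell
    exact ⟨fun _ => h, fun hneg => absurd hneg (inv_nonneg.2 (pCond_nonneg hp hy)).not_gt⟩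
  · simp

lemma isFeasibleDir_neg_rateDir (hp : IsPMF Y p) {π : Bool → ℝ → ℝ} {c₀ : Bool} {y₀ : ℝ}
    (h : 0 < π c₀ y₀) : IsFeasibleDir Y π (-rateDir Y p c₀ y₀) := by
  intro c y hy
  rw [Pi.neg_apply, Pi.neg_apply, rateDir_apply]
  split_ifs with hcell
  · obtain ⟨rfl, rfl⟩ := hcell
    exact ⟨fun hpos => absurd hpos (neg_nonpos.2 (inv_nonneg.2 (pCond_nonneg hp hy))).not_gt,
      fun _ => h⟩
  · simp

lemma eventually_add_mul_mem_Icc {a d : ℝ} (ha : a ∈ Set.Icc (0 : ℝ) 1)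
    (hup : 0 < d → a < 1) (hdown : d < 0 → 0 < a) :
    ∀ᶠ t in 𝓝[>] (0 : ℝ), a + t * d ∈ Set.Icc (0 : ℝ) 1 := by
  have hlim : Tendsto (fun t => a + t * d) (𝓝[>] 0) (𝓝 a) := by
    refine tendsto_nhdsWithin_of_tendsto_nhds ?_
    simpa using ((continuous_id.mul continuous_const).const_add a).tendsto (0 : ℝ)
  have hpos : ∀ᶠ t in 𝓝[>] (0 : ℝ), 0 < t := self_mem_nhdsWithin
  rcases lt_trichotomy d 0 with hd | rfl | hd
  · filter_upwards [hlim.eventually (lt_mem_nhds (hdown hd)), hpos] with t h0 ht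
    exact ⟨h0.le, by nlinarith [ha.2]⟩
  · simp only [mul_zero, add_zero]
    exact Eventually.of_forall fun _ => ha
  · filter_upwards [hlim.eventually (gt_mem_nhds (hup hd)), hpos] with t h1 ht
    exact ⟨by nlinarith [ha.1], h1.le⟩

lemma eventually_admissible_add_smul {π δ : Bool → ℝ → ℝ} (hπ : Admissible Y π)
    (hδ : IsFeasibleDir Y π δ) : ∀ᶠ t in 𝓝[>] (0 : ℝ), Admissible Y (π + t • δ) := by
  simp only [Admissible, Pi.add_apply, Pi.smul_apply, smul_eq_mul, eventually_all,
    eventually_all_finset]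
  intro c y hy
  exact eventually_add_mul_mem_Icc (hπ c y hy) (hδ c y hy).1 (hδ c y hy).2

def IsParityOptimal (Y : Finset ℝ) (p πs : Bool → ℝ → ℝ) : Prop :=
  Admissible Y πs ∧ selRate Y p πs true = selRate Y p πs false ∧
    ∀ π', Admissible Y π' → selRate Y p π' true = selRate Y p π' false →
      util Y p π' ≤ util Y p πs

variable {πs : Bool → ℝ → ℝ}

lemma mem_TS_true {y : ℝ} :
    (y, true) ∈ TS Y p πs ↔ y ∈ Y ∧ 0 < y ∧ 0 < pCond Y p true y ∧ πs true y < 1 := by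
  simp [TS]

lemma mem_TS_false {y : ℝ} :
    (y, false) ∈ TS Y p πs ↔ y ∈ Y ∧ y < 0 ∧ 0 < pCond Y p false y ∧ 0 < πs false y := by
  simp [TS]

lemma util_nonpos_of_isFeasibleDir (hπs : IsParityOptimal Y p πs) {δ : Bool → ℝ → ℝ}
    (hδ : IsFeasibleDir Y πs δ) (hgap : selGap Y p δ = 0) : util Y p δ ≤ 0 := by
  obtain ⟨t, hadm, ht⟩ :=
    ((eventually_admissible_add_smul hπs.1 hδ).and self_mem_nhdsWithin).exists
  have hpar : selGap Y p (πs + t • δ) = 0 := by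
    rw [isLinearMap_selGap.map_add, isLinearMap_selGap.map_smul, hgap, smul_zero, add_zero,
      selGap, hπs.2.1, sub_self]
  have hle := hπs.2.2 _ hadm (sub_eq_zero.1 hpar)
  rw [isLinearMap_util.map_add, isLinearMap_util.map_smul, smul_eq_mul] at hle
  exact nonpos_of_mul_nonpos_left (by linarith) ht

/-- For `(y, c) ∈ 𝒯_s`, the feasible move at `πs` that widens `S_A - S_B` at unit speed. -/
def tsDir (Y : Finset ℝ) (p : Bool → ℝ → ℝ) (yc : ℝ × Bool) : Bool → ℝ → ℝ :=
  if yc.2 then rateDir Y p true yc.1 else -rateDir Y p false yc.1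

lemma isFeasibleDir_tsDir (hp : IsPMF Y p) {yc : ℝ × Bool} (hyc : yc ∈ TS Y p πs) :
    IsFeasibleDir Y πs (tsDir Y p yc) := by
  obtain ⟨y, _ | _⟩ := yc
  · exact isFeasibleDir_neg_rateDir hp (mem_TS_false.1 hyc).2.2.2
  · exact isFeasibleDir_rateDir hp (mem_TS_true.1 hyc).2.2.2

lemma selGap_tsDir {yc : ℝ × Bool} (hyc : yc ∈ TS Y p πs) : selGap Y p (tsDir Y p yc) = 1 := by
  obtain ⟨y, _ | _⟩ := yc
  · obtain ⟨hy, -, hq, -⟩ := mem_TS_false.1 hyc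
    simp [tsDir, isLinearMap_selGap.map_neg, selGap_rateDir_false hy hq.ne']
  · obtain ⟨hy, -, hq, -⟩ := mem_TS_true.1 hyc
    simp [tsDir, selGap_rateDir_true hy hq.ne']

lemma util_tsDir (hp : IsPMF Y p) {yc : ℝ × Bool} (hyc : yc ∈ TS Y p πs) :
    util Y p (tsDir Y p yc) = pG Y p yc.2 * |yc.1| := by
  obtain ⟨y, _ | _⟩ := yc
  · obtain ⟨hy, hneg, hq, -⟩ := mem_TS_false.1 hyc
    simp [tsDir, isLinearMap_util.map_neg, util_rateDir hp hy hq.ne', abs_of_neg hneg]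
  · obtain ⟨hy, hpos, hq, -⟩ := mem_TS_true.1 hyc
    simp [tsDir, util_rateDir hp hy hq.ne', abs_of_pos hpos]

def betaS (Y : Finset ℝ) (p πs : Bool → ℝ → ℝ) : ℝ :=
  sSup {x : ℝ | ∃ yc ∈ TS Y p πs, x = pG Y p yc.2 * |yc.1|}

lemma le_betaS {yc : ℝ × Bool} (hyc : yc ∈ TS Y p πs) : pG Y p yc.2 * |yc.1| ≤ betaS Y p πs := by
  refine le_csSup ?_ ⟨yc, hyc, rfl⟩
  refine ((TS Y p πs).finite_toSet.image fun yc => pG Y p yc.2 * |yc.1|).bddAbove.mono ?_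
  rintro _ ⟨yc, hyc, rfl⟩
  exact ⟨yc, hyc, rfl⟩

lemma betaS_le (hne : (TS Y p πs).Nonempty) {b : ℝ}
    (h : ∀ yc ∈ TS Y p πs, pG Y p yc.2 * |yc.1| ≤ b) : betaS Y p πs ≤ b := by
  obtain ⟨yc, hyc⟩ := hne
  refine csSup_le ⟨_, yc, hyc, rfl⟩ ?_
  rintro _ ⟨yc, hyc, rfl⟩
  exact h yc hyc

lemma betaS_nonneg (hp : IsPMF Y p) (hne : (TS Y p πs).Nonempty) : 0 ≤ betaS Y p πs := by
  obtain ⟨yc, hyc⟩ := hne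
  exact (mul_nonneg (hp.pG_pos yc.2).le (abs_nonneg _)).trans (le_betaS hyc)

lemma posRate_le_selRate (hp : IsPMF Y p) {π : Bool → ℝ → ℝ} (hπ : Admissible Y π) {c : Bool}
    (hfull : ∀ y ∈ Y, 0 < y → 0 < pCond Y p c y → π c y = 1) :
    posRate Y p c ≤ selRate Y p π c := by
  rw [posRate, Finset.sum_filter]
  refine Finset.sum_le_sum fun y hy => ?_
  have hq := pCond_nonneg hp (c := c) hy
  split_ifs with hpos
  · rcases hq.eq_or_lt with hq0 | hq0
    · simp [← hq0]
    · simp [hfull y hy hpos hq0]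
  · exact mul_nonneg hq (hπ c y hy).1

lemma selRate_le_posRate (hp : IsPMF Y p) {π : Bool → ℝ → ℝ} (hπ : Admissible Y π) {c : Bool}
    (hnone : ∀ y ∈ Y, y < 0 → 0 < pCond Y p c y → π c y = 0) :
    selRate Y p π c ≤ posRate Y p c := by
  rw [posRate, Finset.sum_filter]
  refine Finset.sum_le_sum fun y hy => ?_
  have hq := pCond_nonneg hp (c := c) hy
  split_ifs with hpos
  · exact mul_le_of_le_one_right hq (hπ c y hy).2
  · have hneg : y < 0 := lt_of_le_of_ne (not_lt.1 hpos) (hp.1 y hy)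
    rcases hq.eq_or_lt with hq0 | hq0
    · simp [← hq0]
    · simp [hnone y hy hneg hq0]

lemma TS_nonempty (hp : IsPMF Y p) (hπs : IsParityOptimal Y p πs) (hUM : 0 < dUM Y p) :
    (TS Y p πs).Nonempty := by
  by_contra hempty
  rw [Finset.not_nonempty_iff_eq_empty] at hempty
  have hA : posRate Y p true ≤ selRate Y p πs true := by
    refine posRate_le_selRate hp hπs.1 fun y hy hpos hq => ?_
    by_contra hne
    have : (y, true) ∈ TS Y p πs :=
      mem_TS_true.2 ⟨hy, hpos, hq, lt_of_le_of_ne (hπs.1 true y hy).2 hne⟩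
    simp [hempty] at this
  have hB : selRate Y p πs false ≤ posRate Y p false := by
    refine selRate_le_posRate hp hπs.1 fun y hy hneg hq => ?_
    by_contra hne
    have : (y, false) ∈ TS Y p πs :=
      mem_TS_false.2 ⟨hy, hneg, hq, lt_of_le_of_ne (hπs.1 false y hy).1 (Ne.symm hne)⟩
    simp [hempty] at this
  have := hπs.2.1
  unfold dUM at hUM
  linarith

lemma betaS_le_neg_util (hp : IsPMF Y p) (hπs : IsParityOptimal Y p πs)
    (hne : (TS Y p πs).Nonempty) {δ : Bool → ℝ → ℝ} (hδ : IsFeasibleDir Y πs δ)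
    (hgap : selGap Y p δ = -1) : betaS Y p πs ≤ -util Y p δ := by
  refine betaS_le hne fun yc hyc => ?_
  have hexchange := util_nonpos_of_isFeasibleDir hπs ((isFeasibleDir_tsDir hp hyc).add hδ)
    (by rw [isLinearMap_selGap.map_add, selGap_tsDir hyc, hgap, add_neg_cancel])
  rw [isLinearMap_util.map_add, util_tsDir hp hyc] at hexchange
  linarith

lemma pG_mul_le_betaS (hp : IsPMF Y p) (hne : (TS Y p πs).Nonempty) {y : ℝ} (hy : y ∈ Y)
    (hq : 0 < pCond Y p true y) (h : πs true y < 1) : pG Y p true * y ≤ betaS Y p πs := by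
  rcases (hp.1 y hy).lt_or_gt with hneg | hpos
  · exact (mul_neg_of_pos_of_neg (hp.pG_pos true) hneg).le.trans (betaS_nonneg hp hne)
  · simpa [abs_of_pos hpos] using le_betaS (mem_TS_true.2 ⟨hy, hpos, hq, h⟩)

lemma neg_pG_mul_le_betaS (hp : IsPMF Y p) (hne : (TS Y p πs).Nonempty) {y : ℝ} (hy : y ∈ Y)
    (hq : 0 < pCond Y p false y) (h : 0 < πs false y) : -(pG Y p false * y) ≤ betaS Y p πs := by
  rcases (hp.1 y hy).lt_or_gt with hneg | hpos
  · simpa [abs_of_neg hneg] using le_betaS (mem_TS_false.2 ⟨hy, hneg, hq, h⟩)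
  · exact (neg_nonpos.2 (mul_pos (hp.pG_pos false) hpos).le).trans (betaS_nonneg hp hne)

lemma betaS_le_pG_mul (hp : IsPMF Y p) (hπs : IsParityOptimal Y p πs)
    (hne : (TS Y p πs).Nonempty) {y : ℝ} (hy : y ∈ Y) (hq : 0 < pCond Y p true y)
    (h : 0 < πs true y) : betaS Y p πs ≤ pG Y p true * y := by
  simpa [isLinearMap_util.map_neg, util_rateDir hp hy hq.ne'] using
    betaS_le_neg_util hp hπs hne (isFeasibleDir_neg_rateDir hp h)
      (by rw [isLinearMap_selGap.map_neg, selGap_rateDir_true hy hq.ne'])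

lemma betaS_le_neg_pG_mul (hp : IsPMF Y p) (hπs : IsParityOptimal Y p πs)
    (hne : (TS Y p πs).Nonempty) {y : ℝ} (hy : y ∈ Y) (hq : 0 < pCond Y p false y)
    (h : πs false y < 1) : betaS Y p πs ≤ -(pG Y p false * y) := by
  simpa [util_rateDir hp hy hq.ne'] using
    betaS_le_neg_util hp hπs hne (isFeasibleDir_rateDir hp h) (selGap_rateDir_false hy hq.ne')

lemma util_sub_mul_selGap (hp : IsPMF Y p) (β : ℝ) (π : Bool → ℝ → ℝ) :
    util Y p π - β * selGap Y p π =
      ∑ y ∈ Y, pCond Y p true y * (pG Y p true * y - β) * π true y +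
        ∑ y ∈ Y, pCond Y p false y * (pG Y p false * y + β) * π false y := by
  simp only [util, selGap, selRate, Fintype.sum_bool, ← pG_mul_pCond hp, mul_sub, sub_mul,
    mul_add, add_mul, Finset.sum_sub_distrib, Finset.sum_add_distrib, Finset.mul_sum]
  ring_nf

lemma mul_le_mul_of_mem_Icc {m a x : ℝ} (ha : a ∈ Set.Icc (0 : ℝ) 1) (hx : x ∈ Set.Icc (0 : ℝ) 1)
    (hup : a < 1 → m ≤ 0) (hdown : 0 < a → 0 ≤ m) : m * x ≤ m * a := by
  rcases lt_trichotomy m 0 with hm | rfl | hm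
  · have ha0 : a = 0 := le_antisymm (not_lt.1 fun h => (hdown h).not_gt hm) ha.1
    nlinarith [hx.1]
  · simp
  · have ha1 : a = 1 := le_antisymm ha.2 (not_lt.1 fun h => (hup h).not_gt hm)
    nlinarith [hx.2]

lemma util_le_add_betaS_mul_selGap (hp : IsPMF Y p) (hπs : IsParityOptimal Y p πs)
    (hUM : 0 < dUM Y p) {π : Bool → ℝ → ℝ} (hπ : Admissible Y π) :
    util Y p π ≤ util Y p πs + betaS Y p πs * selGap Y p π := by
  have hne := TS_nonempty hp hπs hUM
  have hcell : ∀ c, ∀ y ∈ Y, ∀ m : ℝ, (0 < pCond Y p c y → πs c y < 1 → m ≤ 0) →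
      (0 < pCond Y p c y → 0 < πs c y → 0 ≤ m) →
      pCond Y p c y * m * π c y ≤ pCond Y p c y * m * πs c y := by
    intro c y hy m hup hdown
    rcases (pCond_nonneg hp (c := c) hy).eq_or_lt with hq | hq
    · simp [← hq]
    · simp only [mul_assoc]
      exact mul_le_mul_of_nonneg_left
        (mul_le_mul_of_mem_Icc (hπs.1 c y hy) (hπ c y hy) (hup hq) (hdown hq)) hq.le
  have hlagr : util Y p π - betaS Y p πs * selGap Y p π ≤
      util Y p πs - betaS Y p πs * selGap Y p πs := by
    rw [util_sub_mul_selGap hp, util_sub_mul_selGap hp]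
    refine add_le_add (Finset.sum_le_sum fun y hy => ?_) (Finset.sum_le_sum fun y hy => ?_)
    · exact hcell true y hy _ (fun hq h => sub_nonpos.2 (pG_mul_le_betaS hp hne hy hq h))
        (fun hq h => sub_nonneg.2 (betaS_le_pG_mul hp hπs hne hy hq h))
    · exact hcell false y hy _
        (fun hq h => by linarith [betaS_le_neg_pG_mul hp hπs hne hy hq h])
        (fun hq h => by linarith [neg_pG_mul_le_betaS hp hne hy hq h])
  have hgap : selGap Y p πs = 0 := sub_eq_zero.2 hπs.2.1
  rw [hgap, mul_zero, sub_zero] at hlagr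
  linarith

lemma ConvexOn.mul_le_of_tendsto_slope_zero {g : ℝ → ℝ} (hconv : ConvexOn ℝ (Set.Ici 0) g)
    (hg0 : g 0 = 0) {gR : ℝ} (hgR : Tendsto (fun h : ℝ => (g h - g 0) / h) (𝓝[>] 0) (𝓝 gR))
    {d : ℝ} (hd : 0 ≤ d) : gR * d ≤ g d := by
  rcases hd.eq_or_lt with rfl | hd
  · simp [hg0]
  have hderiv : HasDerivWithinAt g gR (Set.Ioi 0) 0 := by
    rw [hasDerivWithinAt_iff_tendsto_slope' Set.self_notMem_Ioi]
    simpa [slope_fun_def_field] using hgR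
  have hslope := hconv.le_slope_of_hasDerivWithinAt_Ioi Set.self_mem_Ici hd.le hd hderiv
  rwa [slope_def_field, hg0, sub_zero, sub_zero, le_div_iff₀ hd] at hslope

lemma pG_mul_abs_le_of_isOptimal (hp : IsPMF Y p) {g : ℝ → ℝ} (hg0 : g 0 = 0) {lam gR : ℝ}
    (hgR : Tendsto (fun h : ℝ => (g h - g 0) / h) (𝓝[>] 0) (𝓝 gR))
    (hπs : IsParityOptimal Y p πs) {π : Bool → ℝ → ℝ} (hπ : IsOptimal Y p g lam π)
    (hdisp : disp Y p π = 0) {yc : ℝ × Bool} (hyc : yc ∈ TS Y p πs) :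
    pG Y p yc.2 * |yc.1| ≤ lam * gR := by
  have hUπ : util Y p π ≤ util Y p πs := hπs.2.2 π hπ.1 (sub_eq_zero.1 (abs_eq_zero.1 hdisp))
  refine ge_of_tendsto (hgR.const_mul lam) ?_
  filter_upwards [eventually_admissible_add_smul hπs.1 (isFeasibleDir_tsDir hp hyc),
    self_mem_nhdsWithin] with t hadm (ht : 0 < t)
  have hJ := hπ.2 _ hadm
  have hdisp' : disp Y p (πs + t • tsDir Y p yc) = t := by
    change |selGap Y p _| = t
    rw [isLinearMap_selGap.map_add, isLinearMap_selGap.map_smul, selGap_tsDir hyc, selGap,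
      hπs.2.1, sub_self, smul_eq_mul, mul_one, zero_add, abs_of_pos ht]
  have hU : util Y p (πs + t • tsDir Y p yc) = util Y p πs + t * (pG Y p yc.2 * |yc.1|) := by
    rw [isLinearMap_util.map_add, isLinearMap_util.map_smul, util_tsDir hp hyc, smul_eq_mul]
  rw [obj, obj, hdisp', hU, hdisp, hg0, mul_zero, sub_zero] at hJ
  rw [hg0, sub_zero, ← mul_div_assoc, le_div_iff₀ ht]
  linarith

lemma isOptimal_of_betaS_le (hp : IsPMF Y p) {g : ℝ → ℝ} (hconv : ConvexOn ℝ (Set.Ici 0) g)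
    (hg0 : g 0 = 0) {lam gR : ℝ} (hlam : 0 ≤ lam)
    (hgR : Tendsto (fun h : ℝ => (g h - g 0) / h) (𝓝[>] 0) (𝓝 gR))
    (hπs : IsParityOptimal Y p πs) (hUM : 0 < dUM Y p) (hβ : betaS Y p πs ≤ lam * gR) :
    IsOptimal Y p g lam πs := by
  refine ⟨hπs.1, fun π hπ => ?_⟩
  have hβ0 := betaS_nonneg hp (TS_nonempty hp hπs hUM)
  have hd : 0 ≤ disp Y p π := abs_nonneg _
  have hgap : betaS Y p πs * selGap Y p π ≤ betaS Y p πs * disp Y p π :=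
    mul_le_mul_of_nonneg_left (le_abs_self _) hβ0
  have hpen : lam * (gR * disp Y p π) ≤ lam * g (disp Y p π) :=
    mul_le_mul_of_nonneg_left (hconv.mul_le_of_tendsto_slope_zero hg0 hgR hd) hlam
  calc obj Y p g lam π = util Y p π - lam * g (disp Y p π) := rfl
    _ ≤ util Y p πs + betaS Y p πs * disp Y p π - lam * (gR * disp Y p π) := by
        linarith [util_le_add_betaS_mul_selGap hp hπs hUM hπ]
    _ ≤ util Y p πs := by nlinarith [mul_le_mul_of_nonneg_right hβ hd]
    _ = obj Y p g lam πs := by simp [obj, disp, hπs.2.1, hg0]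

/-- Full-satisfaction criterion. Assume `Δ_UM > 0`. The penalty
`(g, λ)` is fully satisfactory (some optimal policy has `Δ(π) = 0`) iff
`β_s ≤ λ·g'₊(0)`, where `β_s = max_{(y,c) ∈ 𝒯_s} p(c)·|y|` is computed from any
maximizer `πs` of the utility among demographic-parity policies. -/
theorem stmt_6 (Y : Finset ℝ) (p : Bool → ℝ → ℝ) (hp : IsPMF Y p)
    (g : ℝ → ℝ) (hg : AdmissiblePenalty g) (lam : ℝ) (hlam : 0 ≤ lam)
    (hUM : 0 < dUM Y p)
    (πs : Bool → ℝ → ℝ) (hπs : Admissible Y πs)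
    (hpar : selRate Y p πs true = selRate Y p πs false)
    (hπsopt : ∀ π', Admissible Y π' → selRate Y p π' true = selRate Y p π' false →
      util Y p π' ≤ util Y p πs)
    (gR : ℝ)
    (hgR : Tendsto (fun h : ℝ => (g h - g 0) / h) (𝓝[>] 0) (𝓝 gR)) :
    (∃ π, IsOptimal Y p g lam π ∧ disp Y p π = 0) ↔
      sSup {x : ℝ | ∃ yc ∈ TS Y p πs, x = pG Y p yc.2 * |yc.1|} ≤ lam * gR := by
  have hopt : IsParityOptimal Y p πs := ⟨hπs, hpar, hπsopt⟩
  change _ ↔ betaS Y p πs ≤ lam * gR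
  constructor
  · rintro ⟨π, hπ, hdisp⟩
    exact betaS_le (TS_nonempty hp hopt hUM) fun yc hyc =>
      pG_mul_abs_le_of_isOptimal hp hg.1 hgR hopt hπ hdisp hyc
  · intro hβ
    refine ⟨πs, isOptimal_of_betaS_le hp hg.2.2.1 hg.1 hlam hgR hopt hUM hβ, ?_⟩
    simp [disp, hpar]
end
end

section
/- (Reformulation of the penalized problem.) Assume Δ_UM > 0. Then max over policies π of J(π) = U(π) − λ·g(Δ(π)) equals the maximum, over real variables z_{yc} for (y,c) ∈ 𝒯_e satisfying 0 ≤ z_{yc} ≤ p(y|c) and ∑_{(y,c) ∈ 𝒯_e} z_{yc} ≤ Δ_UM, of E[Y_+] − ∑_{(y,c) ∈ 𝒯_e} z_{yc}·p(c)·|y| − λ·g(Δ_UM − ∑_{(y,c) ∈ 𝒯_e} z_{yc}), where E[Y_+] = ∑_{c, y>0} p(c,y)·y and 𝒯_e = {(y,A) : y > 0, p(y|A) > 0} ∪ {(y,B) : y < 0, p(y|B) > 0}. -/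
/-!
Static setting: `Y` is a finite set of nonzero real qualifications; the two groups
`A`/`B` are encoded as `true`/`false`; `p c y` is the joint pmf on group × qualification.
-/

open Finset Filter Topology
open scoped Classical

noncomputable section

/-!
Measure a policy `π` by its deviation `z(y,c) = p(y|c)·|π(c,y) − π_UM(y)|` from the
unconstrained maximizer `π_UM = 1[y > 0]`. The utility falls short of `E[Y₊]` by exactly
`∑ z(y,c)·p(c)·|y|`, summed over all pairs, while `S_A − S_B = Δ_UM − ∑ ± z(y,c)`, where the
sign is `+` exactly on `𝒯_e` (rejecting qualified members of `A`, accepting unqualified members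
of `B`). So `U(π) ≤ E[Y₊] − ∑_{𝒯_e} z·p(c)·|y|` and `Δ(π) ≥ Δ_UM − ∑_{𝒯_e} z`: every policy is
dominated by the restriction of its deviation to `𝒯_e`. Conversely every feasible `z` is the
deviation of an explicit policy, whose objective is exactly the reduced one.
-/

namespace PenalizedSelection

variable {Y : Finset ℝ} {p : Bool → ℝ → ℝ}

def umPolicy (y : ℝ) : ℝ := if 0 < y then 1 else 0

def qualSign (y : ℝ) : ℝ := if 0 < y then 1 else -1

/-- `+1` exactly on the pairs where deviating from `umPolicy` lowers `S_A − S_B`. -/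
def effSign (yc : ℝ × Bool) : ℝ := (if yc.2 then 1 else -1) * qualSign yc.1

def deviation (Y : Finset ℝ) (p π : Bool → ℝ → ℝ) (yc : ℝ × Bool) : ℝ :=
  pCond Y p yc.2 yc.1 * |π yc.2 yc.1 - umPolicy yc.1|

lemma mem_TE (hp : IsPMF Y p) {yc : ℝ × Bool} :
    yc ∈ TE Y p ↔ yc.1 ∈ Y ∧ effSign yc = 1 ∧ 0 < pCond Y p yc.2 yc.1 := by
  obtain ⟨y, c⟩ := yc
  simp only [TE, mem_filter, mem_product, mem_univ, and_true, effSign, qualSign]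
  constructor
  · rintro ⟨hy, ⟨rfl, hy0, hq⟩ | ⟨rfl, hy0, hq⟩⟩
    · simp [hy, hy0, hq]
    · simp [hy, hy0.not_gt, hq]
  · rintro ⟨hy, hs, hq⟩
    refine ⟨hy, ?_⟩
    cases c <;> by_cases hy0 : 0 < y <;> norm_num [hy0] at hs
    · exact .inr ⟨rfl, lt_of_le_of_ne (not_lt.mp hy0) (hp.1 y hy), hq⟩
    · exact .inl ⟨rfl, hy0, hq⟩

lemma TE_subset : TE Y p ⊆ Y ×ˢ univ := filter_subset _ _

lemma sum_ite_mem_TE (f : ℝ × Bool → ℝ) :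
    ∑ yc ∈ Y ×ˢ univ, (if yc ∈ TE Y p then f yc else 0) = ∑ yc ∈ TE Y p, f yc := by
  rw [sum_ite_mem, inter_eq_right.mpr TE_subset]

lemma pCond_pos_of_mem_TE {yc : ℝ × Bool} (h : yc ∈ TE Y p) : 0 < pCond Y p yc.2 yc.1 := by
  obtain ⟨-, ⟨hc, -, hq⟩ | ⟨hc, -, hq⟩⟩ := mem_filter.mp h <;> rwa [hc]

lemma mul_eq_ite_sub_abs_mul_abs (y : ℝ) {x : ℝ} (hx0 : 0 ≤ x) (hx1 : x ≤ 1) :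
    y * x = (if 0 < y then y else 0) - |y| * |x - umPolicy y| := by
  by_cases hy : 0 < y
  · simp [umPolicy, hy, abs_of_pos hy, abs_of_nonpos (sub_nonpos.mpr hx1)]; ring
  · simp [umPolicy, hy, abs_of_nonpos (not_lt.mp hy), abs_of_nonneg hx0]

lemma eq_umPolicy_sub_qualSign_mul_abs (y : ℝ) {x : ℝ} (hx0 : 0 ≤ x) (hx1 : x ≤ 1) :
    x = umPolicy y - qualSign y * |x - umPolicy y| := by
  by_cases hy : 0 < y
  · simp [umPolicy, qualSign, hy, abs_of_nonpos (sub_nonpos.mpr hx1)]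
  · simp [umPolicy, qualSign, hy, abs_of_nonneg hx0]

lemma pCond_nonneg (hp : IsPMF Y p) (c : Bool) {y : ℝ} (hy : y ∈ Y) : 0 ≤ pCond Y p c y :=
  div_nonneg (hp.2.1 c y hy) (hp.2.2.2 c).le

lemma pCond_mul_pG (hp : IsPMF Y p) (c : Bool) (y : ℝ) : pCond Y p c y * pG Y p c = p c y :=
  div_mul_cancel₀ _ (hp.2.2.2 c).ne'

lemma util_eq_eyPos_sub (hp : IsPMF Y p) {π : Bool → ℝ → ℝ} (hπ : Admissible Y π) :
    util Y p π = eyPos Y p -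
      ∑ yc ∈ Y ×ˢ univ, deviation Y p π yc * (pG Y p yc.2 * |yc.1|) := by
  rw [util, eyPos, sum_product_right, ← sum_sub_distrib]
  refine sum_congr rfl fun c _ => ?_
  rw [sum_filter, ← sum_sub_distrib]
  refine sum_congr rfl fun y hy => ?_
  rw [mul_assoc, mul_eq_ite_sub_abs_mul_abs y (hπ c y hy).1 (hπ c y hy).2, deviation,
    ← pCond_mul_pG hp c y]
  split_ifs <;> ring

lemma selRate_eq_posRate_sub {π : Bool → ℝ → ℝ} (hπ : Admissible Y π) (c : Bool) :
    selRate Y p π c = posRate Y p c - ∑ y ∈ Y, qualSign y * deviation Y p π (y, c) := by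
  rw [selRate, posRate, sum_filter, ← sum_sub_distrib]
  refine sum_congr rfl fun y hy => ?_
  conv_lhs => rw [eq_umPolicy_sub_qualSign_mul_abs y (hπ c y hy).1 (hπ c y hy).2]
  simp only [deviation, umPolicy]
  split_ifs <;> ring

lemma selRate_sub_selRate_eq {π : Bool → ℝ → ℝ} (hπ : Admissible Y π) :
    selRate Y p π true - selRate Y p π false =
      dUM Y p - ∑ yc ∈ Y ×ˢ univ, effSign yc * deviation Y p π yc := by
  rw [selRate_eq_posRate_sub hπ, selRate_eq_posRate_sub hπ, dUM, sum_product_right,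
    Fintype.sum_bool]
  simp only [effSign, if_true, Bool.false_eq_true, if_false, one_mul, neg_mul,
    sum_neg_distrib]
  ring

lemma effSign_eq_one_or (yc : ℝ × Bool) : effSign yc = 1 ∨ effSign yc = -1 := by
  unfold effSign qualSign
  split_ifs <;> norm_num

lemma effSign_mul_deviation_le (hp : IsPMF Y p) (π : Bool → ℝ → ℝ) {yc : ℝ × Bool}
    (hyc : yc ∈ Y ×ˢ univ) :
    effSign yc * deviation Y p π yc ≤ if yc ∈ TE Y p then deviation Y p π yc else 0 := by
  have hy : yc.1 ∈ Y := (mem_product.mp hyc).1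
  have hq := pCond_nonneg hp yc.2 hy
  split_ifs with hTE
  · rw [((mem_TE hp).mp hTE).2.1, one_mul]
  · have hdev : 0 ≤ deviation Y p π yc := mul_nonneg hq (abs_nonneg _)
    rcases effSign_eq_one_or yc with hs | hs
    · have hq0 : pCond Y p yc.2 yc.1 = 0 :=
        le_antisymm (not_lt.mp fun hq' => hTE ((mem_TE hp).mpr ⟨hy, hs, hq'⟩)) hq
      simp [deviation, hq0]
    · rw [hs]
      linarith

def InBox (Y : Finset ℝ) (p : Bool → ℝ → ℝ) (z : ℝ × Bool → ℝ) : Prop :=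
  ∀ yc ∈ TE Y p, 0 ≤ z yc ∧ z yc ≤ pCond Y p yc.2 yc.1

def reducedObj (Y : Finset ℝ) (p : Bool → ℝ → ℝ) (g : ℝ → ℝ) (lam : ℝ)
    (z : ℝ × Bool → ℝ) : ℝ :=
  eyPos Y p - (∑ yc ∈ TE Y p, z yc * (pG Y p yc.2 * |yc.1|)) -
    lam * g (dUM Y p - ∑ yc ∈ TE Y p, z yc)

def policyOf (Y : Finset ℝ) (p : Bool → ℝ → ℝ) (z : ℝ × Bool → ℝ) : Bool → ℝ → ℝ :=
  fun c y => if (y, c) ∈ TE Y p then umPolicy y - qualSign y * (z (y, c) / pCond Y p c y)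
    else umPolicy y

section policyOf

variable {z : ℝ × Bool → ℝ}

lemma admissible_policyOf (hz : InBox Y p z) : Admissible Y (policyOf Y p z) := by
  intro c y _
  unfold policyOf
  split_ifs with hTE
  · have hq := pCond_pos_of_mem_TE hTE
    have h0 : 0 ≤ z (y, c) / pCond Y p c y := div_nonneg (hz _ hTE).1 hq.le
    have h1 : z (y, c) / pCond Y p c y ≤ 1 := (div_le_one hq).mpr (hz _ hTE).2
    unfold umPolicy qualSign
    split_ifs <;> constructor <;> linarith
  · unfold umPolicy
    split_ifs <;> norm_num

lemma deviation_policyOf (hz : InBox Y p z) (yc : ℝ × Bool) :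
    deviation Y p (policyOf Y p z) yc = if yc ∈ TE Y p then z yc else 0 := by
  simp only [deviation, policyOf, Prod.mk.eta]
  split_ifs with hTE
  · have hq := pCond_pos_of_mem_TE hTE
    have habs : |qualSign yc.1| = 1 := by unfold qualSign; split_ifs <;> norm_num
    rw [sub_sub_cancel_left, abs_neg, abs_mul, habs, one_mul,
      abs_of_nonneg (div_nonneg (hz _ hTE).1 hq.le), mul_div_cancel₀ _ hq.ne']
  · simp

lemma obj_policyOf (hp : IsPMF Y p) (hz : InBox Y p z) (g : ℝ → ℝ) (lam : ℝ)
    (hsum : ∑ yc ∈ TE Y p, z yc ≤ dUM Y p) :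
    obj Y p g lam (policyOf Y p z) = reducedObj Y p g lam z := by
  have hπ := admissible_policyOf hz
  have hutil : util Y p (policyOf Y p z) =
      eyPos Y p - ∑ yc ∈ TE Y p, z yc * (pG Y p yc.2 * |yc.1|) := by
    simp only [util_eq_eyPos_sub hp hπ, deviation_policyOf hz, ite_mul, zero_mul, sum_ite_mem_TE]
  have hsel : selRate Y p (policyOf Y p z) true - selRate Y p (policyOf Y p z) false =
      dUM Y p - ∑ yc ∈ TE Y p, z yc := by
    rw [selRate_sub_selRate_eq hπ]
    simp only [deviation_policyOf hz, mul_ite, mul_zero, sum_ite_mem_TE]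
    congr 1
    exact sum_congr rfl fun yc hTE => by rw [((mem_TE hp).mp hTE).2.1, one_mul]
  rw [obj, reducedObj, hutil, disp, hsel, abs_of_nonneg (sub_nonneg.mpr hsum)]

end policyOf

section deviation

variable {π : Bool → ℝ → ℝ}

lemma inBox_deviation (hp : IsPMF Y p) (hπ : Admissible Y π) : InBox Y p (deviation Y p π) := by
  intro yc hTE
  have hy : yc.1 ∈ Y := (mem_product.mp (TE_subset hTE)).1
  have hq := pCond_nonneg hp yc.2 hy
  have hπy := hπ yc.2 yc.1 hy
  have habs : |π yc.2 yc.1 - umPolicy yc.1| ≤ 1 := by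
    rw [abs_sub_le_iff]
    unfold umPolicy
    constructor <;> split_ifs <;> linarith
  exact ⟨mul_nonneg hq (abs_nonneg _), mul_le_of_le_one_right hq habs⟩

lemma util_le_eyPos_sub (hp : IsPMF Y p) (hπ : Admissible Y π) :
    util Y p π ≤ eyPos Y p - ∑ yc ∈ TE Y p, deviation Y p π yc * (pG Y p yc.2 * |yc.1|) := by
  rw [util_eq_eyPos_sub hp hπ]
  refine sub_le_sub_left (sum_le_sum_of_subset_of_nonneg TE_subset fun yc hyc _ => ?_) _
  have hy : yc.1 ∈ Y := (mem_product.mp hyc).1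
  exact mul_nonneg (mul_nonneg (pCond_nonneg hp yc.2 hy) (abs_nonneg _))
    (mul_nonneg (hp.2.2.2 yc.2).le (abs_nonneg _))

lemma dUM_sub_le_disp (hp : IsPMF Y p) (hπ : Admissible Y π) :
    dUM Y p - ∑ yc ∈ TE Y p, deviation Y p π yc ≤ disp Y p π := by
  calc dUM Y p - ∑ yc ∈ TE Y p, deviation Y p π yc
      ≤ dUM Y p - ∑ yc ∈ Y ×ˢ univ, effSign yc * deviation Y p π yc := by
        rw [← sum_ite_mem_TE]
        exact sub_le_sub_left (sum_le_sum fun yc hyc => effSign_mul_deviation_le hp π hyc) _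
    _ = selRate Y p π true - selRate Y p π false := (selRate_sub_selRate_eq hπ).symm
    _ ≤ disp Y p π := le_abs_self _

end deviation

/-- Over budget, shrinking `z` proportionally onto `∑ z = Δ_UM` only lowers the cost and
makes the penalty vanish. -/
lemma exists_reducedObj_ge (hpG : ∀ c, 0 ≤ pG Y p c) {g : ℝ → ℝ} (hg0 : g 0 = 0)
    (hmono : MonotoneOn g (Set.Ici 0)) {lam : ℝ} (hlam : 0 ≤ lam) (hUM : 0 ≤ dUM Y p)
    {z : ℝ × Bool → ℝ} (hz : InBox Y p z) {d : ℝ} (hd0 : 0 ≤ d)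
    (hd : dUM Y p - ∑ yc ∈ TE Y p, z yc ≤ d) :
    ∃ z', InBox Y p z' ∧ ∑ yc ∈ TE Y p, z' yc ≤ dUM Y p ∧
      eyPos Y p - ∑ yc ∈ TE Y p, z yc * (pG Y p yc.2 * |yc.1|) - lam * g d ≤
        reducedObj Y p g lam z' := by
  set s := ∑ yc ∈ TE Y p, z yc
  set C := ∑ yc ∈ TE Y p, z yc * (pG Y p yc.2 * |yc.1|)
  by_cases hs : s ≤ dUM Y p
  · refine ⟨z, hz, hs, ?_⟩
    have hg := hmono (Set.mem_Ici.mpr (sub_nonneg.mpr hs)) (Set.mem_Ici.mpr hd0) hd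
    have := mul_le_mul_of_nonneg_left hg hlam
    rw [reducedObj]
    linarith
  · replace hs := not_le.mp hs
    have hs0 : 0 < s := hUM.trans_lt hs
    set t := dUM Y p / s
    have ht0 : 0 ≤ t := div_nonneg hUM hs0.le
    have ht1 : t ≤ 1 := (div_le_one hs0).mpr hs.le
    have hts : ∑ yc ∈ TE Y p, t * z yc = dUM Y p := by
      rw [← mul_sum, div_mul_cancel₀ _ hs0.ne']
    have hC0 : 0 ≤ C := sum_nonneg fun yc hTE =>
      mul_nonneg (hz yc hTE).1 (mul_nonneg (hpG yc.2) (abs_nonneg _))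
    have hgd : 0 ≤ lam * g d := mul_nonneg hlam (hg0 ▸ hmono Set.self_mem_Ici hd0 hd0)
    refine ⟨fun yc => t * z yc, fun yc hTE => ⟨mul_nonneg ht0 (hz yc hTE).1, ?_⟩, hts.le, ?_⟩
    · exact (mul_le_of_le_one_left (hz yc hTE).1 ht1).trans (hz yc hTE).2
    · have htC : ∑ yc ∈ TE Y p, t * z yc * (pG Y p yc.2 * |yc.1|) = t * C := by
        rw [mul_sum]
        exact sum_congr rfl fun yc _ => mul_assoc _ _ _
      rw [reducedObj, hts, htC, sub_self, hg0, mul_zero, sub_zero]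
      nlinarith

lemma exists_obj_le_reducedObj (hp : IsPMF Y p) {g : ℝ → ℝ} (hg : AdmissiblePenalty g)
    {lam : ℝ} (hlam : 0 ≤ lam) (hUM : 0 ≤ dUM Y p) {π : Bool → ℝ → ℝ} (hπ : Admissible Y π) :
    ∃ z, InBox Y p z ∧ ∑ yc ∈ TE Y p, z yc ≤ dUM Y p ∧
      obj Y p g lam π ≤ reducedObj Y p g lam z := by
  obtain ⟨z, hz, hs, hle⟩ := exists_reducedObj_ge (fun c => (hp.2.2.2 c).le) hg.1 hg.2.1 hlam
    hUM (inBox_deviation hp hπ) (abs_nonneg _) (dUM_sub_le_disp hp hπ)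
  exact ⟨z, hz, hs, (sub_le_sub_right (util_le_eyPos_sub hp hπ) _).trans hle⟩

end PenalizedSelection

/-- Reformulation of the penalized problem. Assume `Δ_UM > 0`. The
supremum of `J(π)` over admissible policies equals the supremum, over variables
`z : 𝒯_e → ℝ` with `0 ≤ z_{yc} ≤ p(y|c)` and `∑ z ≤ Δ_UM`, of
`E[Y₊] − ∑ z_{yc}·p(c)·|y| − λ·g(Δ_UM − ∑ z)`. -/
theorem stmt_7 (Y : Finset ℝ) (p : Bool → ℝ → ℝ) (hp : IsPMF Y p)
    (g : ℝ → ℝ) (hg : AdmissiblePenalty g) (lam : ℝ) (hlam : 0 ≤ lam)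
    (hUM : 0 < dUM Y p) :
    sSup {v : ℝ | ∃ π, Admissible Y π ∧ v = obj Y p g lam π} =
      sSup {v : ℝ | ∃ z : ℝ × Bool → ℝ,
        (∀ yc ∈ TE Y p, 0 ≤ z yc ∧ z yc ≤ pCond Y p yc.2 yc.1) ∧
        (∑ yc ∈ TE Y p, z yc) ≤ dUM Y p ∧
        v = eyPos Y p - (∑ yc ∈ TE Y p, z yc * (pG Y p yc.2 * |yc.1|)) -
              lam * g (dUM Y p - ∑ yc ∈ TE Y p, z yc)} := by
  refine csSup_eq_csSup_of_forall_exists_le ?_ ?_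
  · rintro _ ⟨π, hπ, rfl⟩
    obtain ⟨z, hz, hs, hle⟩ := PenalizedSelection.exists_obj_le_reducedObj hp hg hlam hUM.le hπ
    exact ⟨_, ⟨z, hz, hs, rfl⟩, hle⟩
  · rintro _ ⟨z, hz, hs, rfl⟩
    exact ⟨_, ⟨_, PenalizedSelection.admissible_policyOf hz, rfl⟩,
      (PenalizedSelection.obj_policyOf hp hz g lam hs).ge⟩
end
end

section
/- (Unpenalized dynamics equalize.) Assume q(y|y',d) > 0 for all y, y' ∈ 𝒴 and d ∈ {0,1}, and λ = 0, so that at each step the (unique) optimal policy selects exactly the individuals with positive qualification. Then the qualification distributions of the two groups converge to each other in total variation: lim_{t→∞} ∑_y |p_t(y|A) − p_t(y|B)| = 0; in particular lim_{t→∞} Δ_t = 0, where Δ_t = |∑_{y>0} p_t(y|A) − ∑_{y>0} p_t(y|B)|. -/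
/-!
Dynamic setting: `Y` is a finite set of nonzero real qualifications; groups `A`/`B`
are encoded as `true`/`false` with weights `wA`/`wB`; `q y y' d` is the probability
of moving to qualification `y` from `y'` under decision `d`; `pA t`/`pB t` are the
group qualification distributions at time `t`, and at every step the institution
uses a myopic maximizer of the penalized objective.
-/

open Finset Filter Topology
open scoped Classical

noncomputable section

/-- `r` is a probability distribution on `Y`. -/
def IsDist (Y : Finset ℝ) (r : ℝ → ℝ) : Prop :=
  (∀ y ∈ Y, 0 ≤ r y) ∧ ∑ y ∈ Y, r y = 1

/-- `q` is a Markov kernel on `Y` (for each decision `d`). -/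
def IsKernel (Y : Finset ℝ) (q : ℝ → ℝ → Bool → ℝ) : Prop :=
  (∀ y ∈ Y, ∀ y' ∈ Y, ∀ d, 0 ≤ q y y' d) ∧
    ∀ y' ∈ Y, ∀ d, (∑ y ∈ Y, q y y' d) = 1

/-- One-step update of a group distribution `r` under selection probabilities `sel`:
`p'(y) = ∑_{y'} r(y')·(sel(y')·q(y|y',1) + (1 − sel(y'))·q(y|y',0))`. -/
def stepDist (Y : Finset ℝ) (q : ℝ → ℝ → Bool → ℝ) (r sel : ℝ → ℝ) (y : ℝ) : ℝ :=
  ∑ y' ∈ Y, r y' * (sel y' * q y y' true + (1 - sel y') * q y y' false)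

/-- Instantaneous utility `∑_{c,y} p(c)·p_t(y|c)·y·π(1|c,y)`. -/
def dUtil (Y : Finset ℝ) (wA wB : ℝ) (pA pB : ℝ → ℝ) (π : Bool → ℝ → ℝ) : ℝ :=
  wA * ∑ y ∈ Y, pA y * y * π true y + wB * ∑ y ∈ Y, pB y * y * π false y

/-- Instantaneous disparity. -/
def dDisp (Y : Finset ℝ) (pA pB : ℝ → ℝ) (π : Bool → ℝ → ℝ) : ℝ :=
  |(∑ y ∈ Y, pA y * π true y) - ∑ y ∈ Y, pB y * π false y|

/-- Instantaneous penalized objective. -/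
def dObj (Y : Finset ℝ) (wA wB : ℝ) (pA pB : ℝ → ℝ) (g : ℝ → ℝ) (lam : ℝ)
    (π : Bool → ℝ → ℝ) : ℝ :=
  dUtil Y wA wB pA pB π - lam * g (dDisp Y pA pB π)

/-- `π` is a myopic optimal policy for the state `(pA, pB)`. -/
def dOptimal (Y : Finset ℝ) (wA wB : ℝ) (pA pB : ℝ → ℝ) (g : ℝ → ℝ) (lam : ℝ)
    (π : Bool → ℝ → ℝ) : Prop :=
  Admissible Y π ∧
    ∀ π', Admissible Y π' → dObj Y wA wB pA pB g lam π' ≤ dObj Y wA wB pA pB g lam π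

/-- A trajectory of the myopic dynamics: at every time `t` the institution uses a
myopic optimal policy `πt t`, and the group distributions evolve accordingly. -/
def Trajectory (Y : Finset ℝ) (q : ℝ → ℝ → Bool → ℝ) (wA wB : ℝ) (g : ℝ → ℝ)
    (lam : ℝ) (pA pB : ℕ → ℝ → ℝ) (πt : ℕ → Bool → ℝ → ℝ) : Prop :=
  ∀ t, dOptimal Y wA wB (pA t) (pB t) g lam (πt t) ∧
    (∀ y ∈ Y, pA (t + 1) y = stepDist Y q (pA t) (πt t true) y) ∧
    (∀ y ∈ Y, pB (t + 1) y = stepDist Y q (pB t) (πt t false) y)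

/-- The utility-maximizing threshold selection rule. -/
def thr : ℝ → ℝ := fun y => if 0 < y then 1 else 0

/-!
Under the threshold rule both groups are driven by the same column-stochastic matrix
`K y y' = q(y | y', 1[y' > 0])`, so the difference `d_t = p_t(·|A) - p_t(·|B)` evolves
linearly and keeps total mass `0`. With the Doeblin minorant `m y = min_{y'} K y y' > 0`,
subtracting `m y · ∑ d_t = 0` from `(K d_t) y` gives `‖K d_t‖₁ ≤ (1 - ∑ m) ‖d_t‖₁`, so
`‖d_t‖₁` decays geometrically; and `Δ_t ≤ ‖d_t‖₁`.
-/

section Contraction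

variable {α : Type*} {s : Finset α} {K : α → α → ℝ}

theorem sum_sum_mul_eq_sum_of_sum_eq_one (hK : ∀ y' ∈ s, ∑ y ∈ s, K y y' = 1) (f : α → ℝ) :
    ∑ y ∈ s, ∑ y' ∈ s, f y' * K y y' = ∑ y' ∈ s, f y' := by
  rw [Finset.sum_comm]
  exact Finset.sum_congr rfl fun y' hy' => by rw [← Finset.mul_sum, hK y' hy', mul_one]

theorem sum_abs_sum_mul_le_of_minorant (hK : ∀ y' ∈ s, ∑ y ∈ s, K y y' = 1) {m : α → ℝ}
    (hm : ∀ y ∈ s, ∀ y' ∈ s, m y ≤ K y y') {f : α → ℝ} (hf : ∑ y' ∈ s, f y' = 0) :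
    ∑ y ∈ s, |∑ y' ∈ s, f y' * K y y'| ≤ (1 - ∑ y ∈ s, m y) * ∑ y' ∈ s, |f y'| := by
  have hrow : ∀ y ∈ s, |∑ y' ∈ s, f y' * K y y'| ≤ ∑ y' ∈ s, |f y'| * (K y y' - m y) := by
    intro y hy
    have hshift : ∑ y' ∈ s, f y' * K y y' = ∑ y' ∈ s, f y' * (K y y' - m y) := by
      simp only [mul_sub, Finset.sum_sub_distrib, ← Finset.sum_mul, hf, zero_mul, sub_zero]
    rw [hshift]
    refine (Finset.abs_sum_le_sum_abs _ _).trans (Finset.sum_le_sum fun y' hy' => ?_)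
    rw [abs_mul, abs_of_nonneg (sub_nonneg.2 (hm y hy y' hy'))]
  calc ∑ y ∈ s, |∑ y' ∈ s, f y' * K y y'|
      ≤ ∑ y ∈ s, ∑ y' ∈ s, |f y'| * (K y y' - m y) := Finset.sum_le_sum hrow
    _ = (1 - ∑ y ∈ s, m y) * ∑ y' ∈ s, |f y'| := by
      rw [Finset.sum_comm, Finset.mul_sum]
      refine Finset.sum_congr rfl fun y' hy' => ?_
      rw [← Finset.mul_sum, Finset.sum_sub_distrib, hK y' hy']
      ring

theorem exists_lt_one_sum_abs_sum_mul_le (hpos : ∀ y ∈ s, ∀ y' ∈ s, 0 < K y y')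
    (hK : ∀ y' ∈ s, ∑ y ∈ s, K y y' = 1) :
    ∃ ρ, 0 ≤ ρ ∧ ρ < 1 ∧ ∀ f : α → ℝ, ∑ y' ∈ s, f y' = 0 →
      ∑ y ∈ s, |∑ y' ∈ s, f y' * K y y'| ≤ ρ * ∑ y' ∈ s, |f y'| := by
  rcases s.eq_empty_or_nonempty with rfl | hne
  · exact ⟨0, le_rfl, zero_lt_one, fun f _ => by simp⟩
  set m : α → ℝ := fun y => s.inf' hne (K y)
  have hm : ∀ y ∈ s, ∀ y' ∈ s, m y ≤ K y y' := fun y _ y' hy' => Finset.inf'_le _ hy'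
  obtain ⟨y₀, hy₀⟩ := hne
  have hmass_pos : 0 < ∑ y ∈ s, m y :=
    Finset.sum_pos (fun y hy => (Finset.lt_inf'_iff _).2 (hpos y hy)) ⟨y₀, hy₀⟩
  have hmass_le : ∑ y ∈ s, m y ≤ 1 :=
    (Finset.sum_le_sum fun y hy => hm y hy y₀ hy₀).trans_eq (hK y₀ hy₀)
  exact ⟨1 - ∑ y ∈ s, m y, by linarith, by linarith,
    fun f hf => sum_abs_sum_mul_le_of_minorant hK hm hf⟩

theorem tendsto_sum_abs_of_pos_of_sum_eq_one
    (hpos : ∀ y ∈ s, ∀ y' ∈ s, 0 < K y y') (hK : ∀ y' ∈ s, ∑ y ∈ s, K y y' = 1)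
    {d : ℕ → α → ℝ} (hd₀ : ∑ y ∈ s, d 0 y = 0)
    (hd : ∀ t, ∀ y ∈ s, d (t + 1) y = ∑ y' ∈ s, d t y' * K y y') :
    Tendsto (fun t => ∑ y ∈ s, |d t y|) atTop (𝓝 0) := by
  have hmass : ∀ t, ∑ y ∈ s, d t y = 0 := by
    intro t
    induction t with
    | zero => exact hd₀
    | succ t ih =>
      rw [Finset.sum_congr rfl (hd t), sum_sum_mul_eq_sum_of_sum_eq_one hK, ih]
  obtain ⟨ρ, hρ₀, hρ₁, hcontr⟩ := exists_lt_one_sum_abs_sum_mul_le hpos hK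
  have hstep : ∀ t, ∑ y ∈ s, |d (t + 1) y| ≤ ρ * ∑ y ∈ s, |d t y| := fun t => by
    rw [Finset.sum_congr rfl fun y hy => congrArg abs (hd t y hy)]
    exact hcontr _ (hmass t)
  have hgeom : Tendsto (fun t => ρ ^ t * ∑ y ∈ s, |d 0 y|) atTop (𝓝 0) := by
    simpa using (tendsto_pow_atTop_nhds_zero_of_lt_one hρ₀ hρ₁).mul_const _
  exact squeeze_zero (fun t => Finset.sum_nonneg fun y _ => abs_nonneg _)
    (fun t => le_geom (u := fun t => ∑ y ∈ s, |d t y|) hρ₀ t fun k _ => hstep k) hgeom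

end Contraction

def thrKernel (q : ℝ → ℝ → Bool → ℝ) (y y' : ℝ) : ℝ := q y y' (decide (0 < y'))

theorem stepDist_thr (Y : Finset ℝ) (q : ℝ → ℝ → Bool → ℝ) (r : ℝ → ℝ) (y : ℝ) :
    stepDist Y q r thr y = ∑ y' ∈ Y, r y' * thrKernel q y y' := by
  refine Finset.sum_congr rfl fun y' _ => ?_
  by_cases h : 0 < y' <;> simp [thr, thrKernel, h]

theorem stmt_10_general (Y : Finset ℝ)
    (q : ℝ → ℝ → Bool → ℝ) (hq : IsKernel Y q)
    (hqpos : ∀ y ∈ Y, ∀ y' ∈ Y, ∀ d : Bool, 0 < q y y' d)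
    (pA pB : ℕ → ℝ → ℝ)
    (hA0 : IsDist Y (pA 0)) (hB0 : IsDist Y (pB 0))
    (hAstep : ∀ t, ∀ y ∈ Y, pA (t + 1) y = stepDist Y q (pA t) thr y)
    (hBstep : ∀ t, ∀ y ∈ Y, pB (t + 1) y = stepDist Y q (pB t) thr y) :
    Tendsto (fun t => ∑ y ∈ Y, |pA t y - pB t y|) atTop (𝓝 0) ∧
    Tendsto (fun t =>
        |(∑ y ∈ Y.filter (fun y => 0 < y), pA t y) -
          ∑ y ∈ Y.filter (fun y => 0 < y), pB t y|) atTop (𝓝 0) := by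
  have htv : Tendsto (fun t => ∑ y ∈ Y, |pA t y - pB t y|) atTop (𝓝 0) := by
    refine tendsto_sum_abs_of_pos_of_sum_eq_one (K := thrKernel q)
      (fun y hy y' hy' => hqpos y hy y' hy' _) (fun y' hy' => hq.2 y' hy' _) ?_
      fun t y hy => ?_
    · rw [Finset.sum_sub_distrib, hA0.2, hB0.2, sub_self]
    · simp only [hAstep t y hy, hBstep t y hy, stepDist_thr, ← Finset.sum_sub_distrib, sub_mul]
  refine ⟨htv, squeeze_zero (fun t => abs_nonneg _) (fun t => ?_) htv⟩
  rw [← Finset.sum_sub_distrib]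
  exact (Finset.abs_sum_le_sum_abs _ _).trans <| Finset.sum_le_sum_of_subset_of_nonneg
    (Finset.filter_subset _ _) fun y _ _ => abs_nonneg _

/-- Unpenalized dynamics equalize. If `q > 0` everywhere and
`λ = 0` (so the unique myopic optimal policy is the threshold rule), the two group
distributions converge to each other in total variation, and `Δ_t → 0`. -/
theorem stmt_10 (Y : Finset ℝ) (hY : ∀ y ∈ Y, y ≠ 0)
    (q : ℝ → ℝ → Bool → ℝ) (hq : IsKernel Y q)
    (hqpos : ∀ y ∈ Y, ∀ y' ∈ Y, ∀ d : Bool, 0 < q y y' d)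
    (pA pB : ℕ → ℝ → ℝ)
    (hA0 : IsDist Y (pA 0)) (hB0 : IsDist Y (pB 0))
    (hAstep : ∀ t, ∀ y ∈ Y, pA (t + 1) y = stepDist Y q (pA t) thr y)
    (hBstep : ∀ t, ∀ y ∈ Y, pB (t + 1) y = stepDist Y q (pB t) thr y) :
    Tendsto (fun t => ∑ y ∈ Y, |pA t y - pB t y|) atTop (𝓝 0) ∧
    Tendsto (fun t =>
        |(∑ y ∈ Y.filter (fun y => 0 < y), pA t y) -
          ∑ y ∈ Y.filter (fun y => 0 < y), pB t y|) atTop (𝓝 0) :=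
  stmt_10_general Y q hq hqpos pA pB hA0 hB0 hAstep hBstep
end
end

section
/- (Penalties can cause persistent disparity.) There exist a finite set 𝒴 of nonzero reals, a kernel q(y|y',d) with q(y|y',d) > 0 for all y, y', d, group probabilities p(A) = p(B) = 1/2, a penalty level λ > 0 with g(x) = x, and initial group distributions p_0(·|A), p_0(·|B), such that under the myopic dynamics (where at each step the institution uses a maximizer of J_t) the disparity satisfies lim_{t→∞} Δ_t > Δ_0 > 0. A witness is 𝒴 = {−2, −1, 2}, λ = 0.7, the transition kernel of Figure 1 (q(−2|−1,1)=0.8, q(−1|−1,1)=0.1, q(2|−1,1)=0.1; q(−2|−1,0)=0.1, q(−1|−1,0)=0.1, q(2|−1,0)=0.8; q(·|−2,d) = (0.8,0.1,0.1) and q(·|2,d) = (0.1,0.1,0.8) for both d), with p_0(·|A) = (0.3, 0.1, 0.6) and p_0(·|B) = (0.5, 0.1, 0.4), which gives Δ_0 = 0.1 and lim_{t→∞} Δ_t = 4/30. -/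
/-!
Dynamic setting: `Y` is a finite set of nonzero real qualifications; groups `A`/`B`
are encoded as `true`/`false` with weights `wA`/`wB`; `q y y' d` is the probability
of moving to qualification `y` from `y'` under decision `d`; `pA t`/`pB t` are the
group qualification distributions at time `t`, and at every step the institution
uses a myopic maximizer of the penalized objective.
-/

open Finset Filter Topology
open scoped Classical

noncomputable section

/-!
With `g = id` and group `A` ahead (`∑ pB π_B ≤ ∑ pA π_A`), the penalized objective agrees with
the linear functional whose coefficients are the shifted scores `wA·y − λ` for `A` and
`wB·y + λ` for `B`; since `|x| ≥ x` this functional bounds the objective of every policy, so the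
threshold rule applied to the shifted scores is myopically optimal as long as `A` stays ahead.

In the witness (`λ = 0.7`) the shift makes the institution select group `B` at `y = −1`, and
selection sends `−1` down (`q(·|−1,1)` favours `−2`), while the unselected `−1` members of `A`
move up. The masses at `2` evolve by `a ↦ 0.7·a + 0.17` and `b ↦ 0.7·b + 0.1`, so they converge
to `17/30` and `1/3`, and `Δ_t = a_t − b_t − 1/10 = 2/15 − (7/10)^t / 30` increases from `1/10`.
-/

section PenalizedOptimality

variable {Y : Finset ℝ} {wA wB lam : ℝ} {pA pB : ℝ → ℝ}

def shiftedScore (wA wB lam : ℝ) : Bool → ℝ → ℝ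
  | true, y => wA * y - lam
  | false, y => wB * y + lam

def linObj (Y : Finset ℝ) (pA pB : ℝ → ℝ) (s π : Bool → ℝ → ℝ) : ℝ :=
  ∑ y ∈ Y, pA y * s true y * π true y + ∑ y ∈ Y, pB y * s false y * π false y

lemma linObj_shiftedScore_eq (π : Bool → ℝ → ℝ) :
    linObj Y pA pB (shiftedScore wA wB lam) π = dUtil Y wA wB pA pB π
      - lam * ((∑ y ∈ Y, pA y * π true y) - ∑ y ∈ Y, pB y * π false y) := by
  simp only [linObj, dUtil, shiftedScore, mul_sub, mul_sum, ← sum_add_distrib, ← sum_sub_distrib]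
  exact sum_congr rfl fun _ _ => by ring

lemma dObj_id_le_linObj (hlam : 0 ≤ lam) (π : Bool → ℝ → ℝ) :
    dObj Y wA wB pA pB (fun x => x) lam π ≤ linObj Y pA pB (shiftedScore wA wB lam) π := by
  rw [linObj_shiftedScore_eq, dObj, dDisp]
  gcongr
  exact le_abs_self _

lemma dObj_id_eq_linObj {π : Bool → ℝ → ℝ}
    (hgap : ∑ y ∈ Y, pB y * π false y ≤ ∑ y ∈ Y, pA y * π true y) :
    dObj Y wA wB pA pB (fun x => x) lam π = linObj Y pA pB (shiftedScore wA wB lam) π := by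
  rw [linObj_shiftedScore_eq, dObj, dDisp, abs_of_nonneg (sub_nonneg.2 hgap)]

lemma admissible_thr_comp (s : Bool → ℝ → ℝ) : Admissible Y (fun c y => thr (s c y)) := by
  intro c y _
  simp only [thr]
  split_ifs <;> norm_num

lemma mul_le_mul_thr {s u : ℝ} (hu₀ : 0 ≤ u) (hu₁ : u ≤ 1) : s * u ≤ s * thr s := by
  unfold thr
  split_ifs with hs
  · simpa using mul_le_mul_of_nonneg_left hu₁ hs.le
  · simpa using mul_nonpos_of_nonpos_of_nonneg (not_lt.1 hs) hu₀

lemma linObj_le_linObj_thr (hpA : ∀ y ∈ Y, 0 ≤ pA y) (hpB : ∀ y ∈ Y, 0 ≤ pB y)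
    (s : Bool → ℝ → ℝ) {π : Bool → ℝ → ℝ} (hπ : Admissible Y π) :
    linObj Y pA pB s π ≤ linObj Y pA pB s (fun c y => thr (s c y)) := by
  refine add_le_add (sum_le_sum fun y hy => ?_) (sum_le_sum fun y hy => ?_)
  · simpa only [mul_assoc] using mul_le_mul_of_nonneg_left
      (mul_le_mul_thr (s := s true y) (hπ true y hy).1 (hπ true y hy).2) (hpA y hy)
  · simpa only [mul_assoc] using mul_le_mul_of_nonneg_left
      (mul_le_mul_thr (s := s false y) (hπ false y hy).1 (hπ false y hy).2) (hpB y hy)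

theorem dOptimal_id_thr_shiftedScore (hlam : 0 ≤ lam)
    (hpA : ∀ y ∈ Y, 0 ≤ pA y) (hpB : ∀ y ∈ Y, 0 ≤ pB y)
    (hgap : ∑ y ∈ Y, pB y * thr (shiftedScore wA wB lam false y)
      ≤ ∑ y ∈ Y, pA y * thr (shiftedScore wA wB lam true y)) :
    dOptimal Y wA wB pA pB (fun x => x) lam (fun c y => thr (shiftedScore wA wB lam c y)) := by
  refine ⟨admissible_thr_comp _, fun π hπ => ?_⟩
  calc dObj Y wA wB pA pB (fun x => x) lam π
      ≤ linObj Y pA pB (shiftedScore wA wB lam) π := dObj_id_le_linObj hlam π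
    _ ≤ linObj Y pA pB (shiftedScore wA wB lam) (fun c y => thr (shiftedScore wA wB lam c y)) :=
      linObj_le_linObj_thr hpA hpB _ hπ
    _ = _ := (dObj_id_eq_linObj hgap).symm

end PenalizedOptimality

def geomRelax (r L d : ℝ) (t : ℕ) : ℝ := L + d * r ^ t

lemma geomRelax_succ (r L d : ℝ) (t : ℕ) :
    geomRelax r L d (t + 1) = r * geomRelax r L d t + (1 - r) * L := by
  simp only [geomRelax, pow_succ]
  ring

lemma tendsto_geomRelax {r : ℝ} (hr₀ : 0 ≤ r) (hr₁ : r < 1) (L d : ℝ) :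
    Tendsto (geomRelax r L d) atTop (𝓝 L) := by
  show Tendsto (fun t => L + d * r ^ t) atTop (𝓝 L)
  simpa using (tendsto_pow_atTop_nhds_zero_of_lt_one hr₀ hr₁).const_mul d |>.const_add L

namespace PersistentDisparity

def quals : Finset ℝ := {-2, -1, 2}

lemma sum_quals (f : ℝ → ℝ) : ∑ y ∈ quals, f y = f (-2) + f (-1) + f 2 := by
  rw [quals, sum_insert (by norm_num), sum_insert (by norm_num), sum_singleton, add_assoc]

lemma mem_quals {y : ℝ} : y ∈ quals ↔ y = -2 ∨ y = -1 ∨ y = 2 := by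
  simp [quals]

def rowDown (y : ℝ) : ℝ := if y = -2 then 8/10 else 1/10

def rowUp (y : ℝ) : ℝ := if y = 2 then 8/10 else 1/10

def kern (y y' : ℝ) (d : Bool) : ℝ :=
  if y' = 2 ∨ (y' = -1 ∧ d = false) then rowUp y else rowDown y

lemma kern_pos (y y' : ℝ) (d : Bool) : 0 < kern y y' d := by
  unfold kern rowUp rowDown
  split_ifs <;> norm_num

lemma isKernel_kern : IsKernel quals kern := by
  refine ⟨fun y _ y' _ d => (kern_pos y y' d).le, fun y' _ d => ?_⟩
  unfold kern
  split_ifs <;> norm_num [sum_quals, rowUp, rowDown]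

/-- Every row of `kern` gives `-1` probability `1/10`, so the dynamics stays in this family. -/
def distOfTop (a : ℝ) (y : ℝ) : ℝ := if y = 2 then a else if y = -1 then 1/10 else 9/10 - a

lemma isDist_distOfTop {a : ℝ} (h₀ : 0 ≤ a) (h₁ : a ≤ 9/10) : IsDist quals (distOfTop a) := by
  refine ⟨fun y hy => ?_, by norm_num [sum_quals, distOfTop]; ring⟩
  rcases mem_quals.1 hy with rfl | rfl | rfl <;> norm_num [distOfTop] <;> linarith

def policy : Bool → ℝ → ℝ := fun c y => thr (shiftedScore (1/2) (1/2) (7/10) c y)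

lemma sum_distOfTop_mul_policy_true (a : ℝ) : ∑ y ∈ quals, distOfTop a y * policy true y = a := by
  norm_num [sum_quals, distOfTop, policy, shiftedScore, thr]

lemma sum_distOfTop_mul_policy_false (b : ℝ) :
    ∑ y ∈ quals, distOfTop b y * policy false y = 1/10 + b := by
  norm_num [sum_quals, distOfTop, policy, shiftedScore, thr]

lemma dDisp_distOfTop (a b : ℝ) :
    dDisp quals (distOfTop a) (distOfTop b) policy = |a - (1/10 + b)| := by
  rw [dDisp, sum_distOfTop_mul_policy_true, sum_distOfTop_mul_policy_false]

lemma dOptimal_distOfTop {a b : ℝ} (ha : a ≤ 9/10) (hb : 0 ≤ b) (hab : 1/10 + b ≤ a) :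
    dOptimal quals (1/2) (1/2) (distOfTop a) (distOfTop b) (fun x => x) (7/10) policy := by
  have hdist (c : ℝ) (h₀ : 0 ≤ c) (h₁ : c ≤ 9/10) := (isDist_distOfTop h₀ h₁).1
  refine dOptimal_id_thr_shiftedScore (by norm_num) (hdist a (by linarith) ha)
    (hdist b hb (by linarith)) ?_
  change ∑ y ∈ quals, distOfTop b y * policy false y
    ≤ ∑ y ∈ quals, distOfTop a y * policy true y
  rwa [sum_distOfTop_mul_policy_true, sum_distOfTop_mul_policy_false]

lemma stepDist_distOfTop_true (a : ℝ) {y : ℝ} (hy : y ∈ quals) :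
    stepDist quals kern (distOfTop a) (policy true) y = distOfTop (7/10 * a + 17/100) y := by
  rcases mem_quals.1 hy with rfl | rfl | rfl <;>
    norm_num [stepDist, sum_quals, distOfTop, kern, rowUp, rowDown, policy, shiftedScore, thr] <;>
    ring

lemma stepDist_distOfTop_false (b : ℝ) {y : ℝ} (hy : y ∈ quals) :
    stepDist quals kern (distOfTop b) (policy false) y = distOfTop (7/10 * b + 1/10) y := by
  rcases mem_quals.1 hy with rfl | rfl | rfl <;>
    norm_num [stepDist, sum_quals, distOfTop, kern, rowUp, rowDown, policy, shiftedScore, thr] <;>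
    ring

def topMassA : ℕ → ℝ := geomRelax (7/10) (17/30) (1/30)

def topMassB : ℕ → ℝ := geomRelax (7/10) (1/3) (1/15)

lemma disparity_gap (t : ℕ) :
    topMassA t - (1/10 + topMassB t) = 2/15 - (1/30) * (7/10) ^ t := by
  simp only [topMassA, topMassB, geomRelax]
  ring

lemma trajectory :
    Trajectory quals kern (1/2) (1/2) (fun x => x) (7/10) (fun t => distOfTop (topMassA t))
      (fun t => distOfTop (topMassB t)) (fun _ => policy) := by
  intro t
  have hx₁ : (7/10 : ℝ) ^ t ≤ 1 := pow_le_one₀ (by norm_num) (by norm_num)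
  refine ⟨dOptimal_distOfTop ?_ ?_ ?_, fun y hy => ?_, fun y hy => ?_⟩
  · simp only [topMassA, geomRelax]; linarith
  · simp only [topMassB, geomRelax]; positivity
  · linarith [disparity_gap t]
  · rw [stepDist_distOfTop_true _ hy]; norm_num [topMassA, geomRelax_succ]
  · rw [stepDist_distOfTop_false _ hy]; norm_num [topMassB, geomRelax_succ]

lemma dDisp_trajectory (t : ℕ) :
    dDisp quals (distOfTop (topMassA t)) (distOfTop (topMassB t)) policy
      = geomRelax (7/10) (2/15) (-1/30) t := by
  have hx₁ : (7/10 : ℝ) ^ t ≤ 1 := pow_le_one₀ (by norm_num) (by norm_num)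
  rw [dDisp_distOfTop, disparity_gap, abs_of_nonneg (by linarith), geomRelax]
  ring

end PersistentDisparity

open PersistentDisparity in
/-- Penalties can cause persistent disparity. There exist a finite
set of nonzero qualifications, an everywhere-positive kernel, equal group weights
`1/2`, a penalty level `λ > 0` with `g(x) = x`, and initial distributions, such that
along a trajectory of the myopic dynamics the disparity `Δ_t` converges to a limit
strictly larger than `Δ_0 > 0`. -/
theorem stmt_11 :
    ∃ (Y : Finset ℝ) (q : ℝ → ℝ → Bool → ℝ) (lam : ℝ)
      (pA pB : ℕ → ℝ → ℝ) (πt : ℕ → Bool → ℝ → ℝ) (L : ℝ),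
      (∀ y ∈ Y, y ≠ 0) ∧ IsKernel Y q ∧
      (∀ y ∈ Y, ∀ y' ∈ Y, ∀ d : Bool, 0 < q y y' d) ∧
      0 < lam ∧
      IsDist Y (pA 0) ∧ IsDist Y (pB 0) ∧
      Trajectory Y q (1 / 2) (1 / 2) (fun x => x) lam pA pB πt ∧
      Tendsto (fun t => dDisp Y (pA t) (pB t) (πt t)) atTop (𝓝 L) ∧
      0 < dDisp Y (pA 0) (pB 0) (πt 0) ∧
      dDisp Y (pA 0) (pB 0) (πt 0) < L := by
  have hlim : Tendsto (fun t => dDisp quals (distOfTop (topMassA t)) (distOfTop (topMassB t))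
      policy) atTop (𝓝 (2/15)) := by
    simpa only [dDisp_trajectory] using
      tendsto_geomRelax (r := 7/10) (by norm_num) (by norm_num) (2/15) (-1/30)
  have hinit : dDisp quals (distOfTop (topMassA 0)) (distOfTop (topMassB 0)) policy = 1/10 := by
    rw [dDisp_trajectory]; norm_num [geomRelax]
  refine ⟨quals, kern, 7/10, fun t => distOfTop (topMassA t), fun t => distOfTop (topMassB t),
    fun _ => policy, 2/15, ?_, isKernel_kern, fun y _ y' _ d => kern_pos y y' d, by norm_num,
    isDist_distOfTop ?_ ?_, isDist_distOfTop ?_ ?_, trajectory, hlim,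
    by norm_num [hinit], by norm_num [hinit]⟩
  · intro y hy
    rcases mem_quals.1 hy with rfl | rfl | rfl <;> norm_num
  all_goals norm_num [topMassA, topMassB, geomRelax]
end
end

section
/- (Contraction under fast mixing.) Let α = min_{y,y',d} q(y|y',d). Then for any λ ≥ 0, any nondecreasing nonnegative convex g with g(0)=0, and any optimal (myopic) policy π_t at time t, the induced next-step distributions satisfy ∑_y |p_{t+1}(y|A) − p_{t+1}(y|B)| ≤ 2·(1 − α·|𝒴|)·∑_y |p_t(y|A) − p_t(y|B)|. In particular, if α > 1/(2|𝒴|), then lim_{t→∞} ∑_y |p_t(y|A) − p_t(y|B)| = 0 and lim_{t→∞} Δ_t = 0. -/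
/-!
Dynamic setting: `Y` is a finite set of nonzero real qualifications; groups `A`/`B`
are encoded as `true`/`false` with weights `wA`/`wB`; `q y y' d` is the probability
of moving to qualification `y` from `y'` under decision `d`; `pA t`/`pB t` are the
group qualification distributions at time `t`, and at every step the institution
uses a myopic maximizer of the penalized objective.
-/

open Finset Filter Topology
open scoped Classical

noncomputable section

/-!
At a myopic optimum no selection mass can be moved so as to raise the utility without raising
the disparity: a single such move is excluded when it pushes the selection-rate gap towards
zero, and two moves of equal mass pushing the gap in opposite directions are always excluded.
Hence every coordinate where the utility could still grow pushes the gap the same way, and on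
the mass `m = min p_A p_B` shared by both groups the two policies can differ only as this
saturation allows; this gives `2 (∑ m |π_A - π_B| + Δ) ≤ ‖p_A - p_B‖₁`.

Write `p_A = m + u` and `p_B = m + v`. The part of the next-step difference carried by `m` has
total variation at most `2 (1 - α|Y|) ∑ m |π_A - π_B|`, and the part carried by `u` and `v`,
of mass `‖p_A - p_B‖₁`, is shrunk by `1 - α|Y|` because every kernel entry is at least `α`.
Together these give the factor `2 (1 - α|Y|)`; when it is below `1` the gap decays
geometrically, and `Δ_t` with it.
-/

lemma two_mul_sum_posPart_sub {ι : Type*} {s : Finset ι} {f g : ι → ℝ}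
    (h : ∑ i ∈ s, f i = ∑ i ∈ s, g i) :
    2 * ∑ i ∈ s, (f i - g i)⁺ = ∑ i ∈ s, |f i - g i| := by
  have hsub : ∑ i ∈ s, ((f i - g i)⁺ - (f i - g i)⁻) = 0 := by
    simp only [posPart_sub_negPart, sum_sub_distrib, h, sub_self]
  have hadd : ∑ i ∈ s, ((f i - g i)⁺ + (f i - g i)⁻) = ∑ i ∈ s, |f i - g i| := by
    simp only [posPart_add_negPart]
  rw [sum_sub_distrib] at hsub
  rw [sum_add_distrib] at hadd
  linarith

lemma min_mul_abs_sub_add_le {a b x z : ℝ} (ha : 0 ≤ a) (hb : 0 ≤ b) (hx : 0 ≤ x ∧ x ≤ 1)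
    (hz : 0 ≤ z ∧ z ≤ 1) (h : (b = 0 ∨ z = 1) ∨ (a = 0 ∨ x = 0)) :
    min a b * |x - z| + (a * x - b * z) ≤ (a - b)⁺ := by
  have hpos := le_posPart (a - b)
  have hpos0 := posPart_nonneg (a - b)
  rcases h with (rfl | rfl) | (rfl | rfl)
  · rw [min_eq_right ha, sub_zero, posPart_eq_self.2 ha]
    nlinarith
  · rw [abs_of_nonpos (by linarith)]
    rcases le_total a b with hab | hab
    · rw [min_eq_left hab]; nlinarith
    · rw [min_eq_right hab]; nlinarith
  · simp only [min_eq_left hb, zero_mul, zero_add]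
    nlinarith
  · rw [zero_sub, abs_neg, abs_of_nonneg hz.1]
    nlinarith [min_le_right a b]

lemma tendsto_zero_of_le_mul {f : ℕ → ℝ} {c : ℝ} (hf : ∀ n, 0 ≤ f n) (hc₀ : 0 ≤ c) (hc₁ : c < 1)
    (h : ∀ n, f (n + 1) ≤ c * f n) : Tendsto f atTop (𝓝 0) :=
  squeeze_zero hf (fun n => le_geom hc₀ n fun k _ => h k) <| by
    simpa using (tendsto_pow_atTop_nhds_zero_of_lt_one hc₀ hc₁).mul_const (f 0)

def selectionGap (Y : Finset ℝ) (a b : ℝ → ℝ) (π : Bool → ℝ → ℝ) : ℝ :=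
  (∑ y ∈ Y, a y * π true y) - ∑ y ∈ Y, b y * π false y

-- `t` is signed selection mass: the selection rate of group `c` changes by exactly `t`.
def massMove (a b : ℝ → ℝ) (c : Bool) (y₀ t : ℝ) : Bool → ℝ → ℝ :=
  Pi.single c (Pi.single y₀ (t / cond c a b y₀))

def Improvable (a b : ℝ → ℝ) (π : Bool → ℝ → ℝ) (c : Bool) (y : ℝ) : Prop :=
  0 < cond c a b y ∧ (0 < y ∧ π c y < 1 ∨ y < 0 ∧ 0 < π c y)

-- The sign with which a utility-raising move at `(c, y)` changes `selectionGap`.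
def gapDir (c : Bool) (y : ℝ) : ℝ := cond c 1 (-1) * Real.sign y

def overlapMismatch (Y : Finset ℝ) (a b πA πB : ℝ → ℝ) : ℝ :=
  ∑ y ∈ Y, min (a y) (b y) * |πA y - πB y|

lemma overlapMismatch_comm (Y : Finset ℝ) (a b πA πB : ℝ → ℝ) :
    overlapMismatch Y b a πB πA = overlapMismatch Y a b πA πB := by
  simp only [overlapMismatch, min_comm (b _), abs_sub_comm (πB _)]

lemma overlapMismatch_nonneg {Y : Finset ℝ} {a b : ℝ → ℝ} (ha : ∀ y ∈ Y, 0 ≤ a y)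
    (hb : ∀ y ∈ Y, 0 ≤ b y) (πA πB : ℝ → ℝ) : 0 ≤ overlapMismatch Y a b πA πB :=
  sum_nonneg fun y hy => mul_nonneg (le_min (ha y hy) (hb y hy)) (abs_nonneg _)

lemma overlapMismatch_add_sub_le {Y : Finset ℝ} {a b πA πB : ℝ → ℝ} (ha : ∀ y ∈ Y, 0 ≤ a y)
    (hb : ∀ y ∈ Y, 0 ≤ b y) (hπA : ∀ y ∈ Y, 0 ≤ πA y ∧ πA y ≤ 1)
    (hπB : ∀ y ∈ Y, 0 ≤ πB y ∧ πB y ≤ 1)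
    (hsat : ∀ y ∈ Y, (b y = 0 ∨ πB y = 1) ∨ (a y = 0 ∨ πA y = 0)) :
    overlapMismatch Y a b πA πB + ((∑ y ∈ Y, a y * πA y) - ∑ y ∈ Y, b y * πB y) ≤
      ∑ y ∈ Y, (a y - b y)⁺ := by
  rw [overlapMismatch, ← sum_sub_distrib, ← sum_add_distrib]
  exact sum_le_sum fun y hy =>
    min_mul_abs_sub_add_le (ha y hy) (hb y hy) (hπA y hy) (hπB y hy) (hsat y hy)

section OptimalPolicy

variable {Y : Finset ℝ} {wA wB : ℝ} {a b : ℝ → ℝ} {π e e₁ e₂ : Bool → ℝ → ℝ}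

lemma dUtil_add (π e : Bool → ℝ → ℝ) :
    dUtil Y wA wB a b (π + e) = dUtil Y wA wB a b π + dUtil Y wA wB a b e := by
  simp only [dUtil, Pi.add_apply, mul_add, sum_add_distrib]; ring

lemma selectionGap_add (π e : Bool → ℝ → ℝ) :
    selectionGap Y a b (π + e) = selectionGap Y a b π + selectionGap Y a b e := by
  simp only [selectionGap, Pi.add_apply, mul_add, sum_add_distrib]; ring

lemma dDisp_eq_abs_selectionGap (π : Bool → ℝ → ℝ) : dDisp Y a b π = |selectionGap Y a b π| := rfl

lemma Admissible.add_add_of_disjoint (h₁ : Admissible Y (π + e₁)) (h₂ : Admissible Y (π + e₂))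
    (hdisj : ∀ c y, e₁ c y = 0 ∨ e₂ c y = 0) : Admissible Y (π + (e₁ + e₂)) := by
  intro c y hy
  rcases hdisj c y with h | h
  · simpa [h] using h₂ c y hy
  · simpa [h] using h₁ c y hy

lemma dOptimal.not_improving {g : ℝ → ℝ} {lam : ℝ}
    (hopt : dOptimal Y wA wB a b g lam π) (hg : MonotoneOn g (Set.Ici 0)) (hlam : 0 ≤ lam)
    (hadm : Admissible Y (π + e)) (hU : 0 < dUtil Y wA wB a b e)
    (hD : |selectionGap Y a b π + selectionGap Y a b e| ≤ |selectionGap Y a b π|) : False := by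
  have hpen : g (dDisp Y a b (π + e)) ≤ g (dDisp Y a b π) := by
    refine hg (Set.mem_Ici.2 (abs_nonneg _)) (Set.mem_Ici.2 (abs_nonneg _)) ?_
    show |selectionGap Y a b (π + e)| ≤ |selectionGap Y a b π|
    rwa [selectionGap_add]
  have := hopt.2 _ hadm
  simp only [dObj, dUtil_add] at this
  nlinarith

lemma massMove_apply_of_ne {c c' : Bool} {y₀ y t : ℝ} (h : ¬(c' = c ∧ y = y₀)) :
    massMove a b c y₀ t c' y = 0 := by
  by_cases hc : c' = c
  · subst hc
    simp [massMove, show y ≠ y₀ from fun hy => h ⟨rfl, hy⟩]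
  · simp [massMove, hc]

lemma sum_mul_massMove {c c' : Bool} {y₀ t : ℝ} (p : ℝ → ℝ) (hy₀ : y₀ ∈ Y) :
    ∑ y ∈ Y, p y * massMove a b c y₀ t c' y = if c' = c then p y₀ * (t / cond c a b y₀) else 0 := by
  by_cases hc : c' = c
  · subst hc
    simp [massMove, Pi.single_apply, hy₀]
  · simp [massMove, hc]

lemma dUtil_massMove (c : Bool) {y₀ : ℝ} (t : ℝ) (hy₀ : y₀ ∈ Y) (hp : cond c a b y₀ ≠ 0) :
    dUtil Y wA wB a b (massMove a b c y₀ t) = cond c wA wB * y₀ * t := by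
  cases c <;> simp only [dUtil, sum_mul_massMove _ hy₀] <;> simp at hp ⊢ <;> field_simp

lemma selectionGap_massMove (c : Bool) {y₀ : ℝ} (t : ℝ) (hy₀ : y₀ ∈ Y) (hp : cond c a b y₀ ≠ 0) :
    selectionGap Y a b (massMove a b c y₀ t) = cond c 1 (-1) * t := by
  cases c <;> simp only [selectionGap, sum_mul_massMove _ hy₀] <;> simp at hp ⊢ <;> field_simp

lemma Admissible.add_massMove {c : Bool} {y₀ t : ℝ} (hπ : Admissible Y π)
    (h : 0 ≤ π c y₀ + t / cond c a b y₀ ∧ π c y₀ + t / cond c a b y₀ ≤ 1) :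
    Admissible Y (π + massMove a b c y₀ t) := by
  intro c' y hy
  by_cases h' : c' = c ∧ y = y₀
  · obtain ⟨rfl, rfl⟩ := h'
    simpa [massMove] using h
  · simpa [massMove_apply_of_ne h'] using hπ c' y hy

lemma gapDir_eq_one_or_eq_neg_one (c : Bool) {y : ℝ} (hy : y ≠ 0) :
    gapDir c y = 1 ∨ gapDir c y = -1 := by
  rcases Real.sign_apply_eq_of_ne_zero y hy with h | h <;> cases c <;> simp [gapDir, h]

lemma Improvable.ne_zero {c : Bool} {y : ℝ} (h : Improvable a b π c y) : y ≠ 0 := by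
  rcases h.2 with ⟨hy, -⟩ | ⟨hy, -⟩
  exacts [hy.ne', hy.ne]

lemma Admissible.exists_improving_move {c : Bool} {y₀ : ℝ} (hπ : Admissible Y π) (hy₀ : y₀ ∈ Y)
    (himp : Improvable a b π c y₀) (hw : 0 < cond c wA wB) :
    ∃ T > 0, ∀ τ, 0 < τ → τ ≤ T →
      Admissible Y (π + massMove a b c y₀ (Real.sign y₀ * τ)) ∧
      0 < dUtil Y wA wB a b (massMove a b c y₀ (Real.sign y₀ * τ)) ∧
      selectionGap Y a b (massMove a b c y₀ (Real.sign y₀ * τ)) = gapDir c y₀ * τ := by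
  obtain ⟨hp, ⟨hpos, hlt⟩ | ⟨hneg, hgt⟩⟩ := himp
  · refine ⟨cond c a b y₀ * (1 - π c y₀), mul_pos hp (by linarith), fun τ hτ hτT => ⟨?_, ?_, ?_⟩⟩
    · refine hπ.add_massMove ⟨?_, ?_⟩ <;> rw [Real.sign_of_pos hpos, one_mul]
      · have := (hπ c y₀ hy₀).1
        positivity
      · linarith [(div_le_iff₀' hp).2 hτT]
    · rw [dUtil_massMove c _ hy₀ hp.ne', Real.sign_of_pos hpos]
      positivity
    · rw [selectionGap_massMove c _ hy₀ hp.ne', gapDir, mul_assoc]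
  · refine ⟨cond c a b y₀ * π c y₀, mul_pos hp hgt, fun τ hτ hτT => ⟨?_, ?_, ?_⟩⟩
    · refine hπ.add_massMove ⟨?_, ?_⟩ <;> rw [Real.sign_of_neg hneg, neg_one_mul, neg_div]
      · rw [← div_le_iff₀' hp] at hτT
        linarith
      · have := div_pos hτ hp
        linarith [(hπ c y₀ hy₀).2]
    · rw [dUtil_massMove c _ hy₀ hp.ne', Real.sign_of_neg hneg]
      have := mul_pos (mul_pos hw (neg_pos.2 hneg)) hτ
      linarith
    · rw [selectionGap_massMove c _ hy₀ hp.ne', gapDir, mul_assoc]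

lemma dOptimal.gapDir_mul_selectionGap_nonneg {g : ℝ → ℝ} {lam : ℝ} {c : Bool} {y₀ : ℝ}
    (hopt : dOptimal Y wA wB a b g lam π) (hg : MonotoneOn g (Set.Ici 0)) (hlam : 0 ≤ lam)
    (hwA : 0 < wA) (hwB : 0 < wB) (hy₀ : y₀ ∈ Y) (himp : Improvable a b π c y₀) :
    0 ≤ gapDir c y₀ * selectionGap Y a b π := by
  by_contra! hneg
  have hD : selectionGap Y a b π ≠ 0 := by rintro h; simp [h] at hneg
  obtain ⟨T, hT, hmove⟩ := hopt.1.exists_improving_move (wA := wA) (wB := wB) hy₀ himp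
    (by cases c <;> assumption)
  have hτ := min_le_right T |selectionGap Y a b π|
  have hτ₀ : 0 < min T |selectionGap Y a b π| := lt_min hT (abs_pos.2 hD)
  obtain ⟨hadm, hU, hgap⟩ := hmove _ hτ₀ (min_le_left _ _)
  refine hopt.not_improving hg hlam hadm hU ?_
  rw [hgap, abs_le]
  rcases gapDir_eq_one_or_eq_neg_one c himp.ne_zero with h | h <;> rw [h] at hneg ⊢
  · rw [abs_of_neg (by linarith)] at *
    constructor <;> linarith
  · rw [abs_of_pos (by linarith)] at *
    constructor <;> linarith

lemma dOptimal.gapDir_eq_of_improvable {g : ℝ → ℝ} {lam : ℝ} {c₁ c₂ : Bool} {y₁ y₂ : ℝ}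
    (hopt : dOptimal Y wA wB a b g lam π) (hg : MonotoneOn g (Set.Ici 0)) (hlam : 0 ≤ lam)
    (hwA : 0 < wA) (hwB : 0 < wB) (hy₁ : y₁ ∈ Y) (h₁ : Improvable a b π c₁ y₁)
    (hy₂ : y₂ ∈ Y) (h₂ : Improvable a b π c₂ y₂) : gapDir c₁ y₁ = gapDir c₂ y₂ := by
  -- otherwise moving equal mass at both coordinates raises the utility and keeps the gap
  by_contra hne
  have hopp : gapDir c₁ y₁ + gapDir c₂ y₂ = 0 := by
    rcases gapDir_eq_one_or_eq_neg_one c₁ h₁.ne_zero with h | h <;>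
    rcases gapDir_eq_one_or_eq_neg_one c₂ h₂.ne_zero with h' | h' <;> simp_all
  obtain ⟨T₁, hT₁, hmove₁⟩ := hopt.1.exists_improving_move (wA := wA) (wB := wB) hy₁ h₁
    (by cases c₁ <;> assumption)
  obtain ⟨T₂, hT₂, hmove₂⟩ := hopt.1.exists_improving_move (wA := wA) (wB := wB) hy₂ h₂
    (by cases c₂ <;> assumption)
  obtain ⟨hadm₁, hU₁, hgap₁⟩ := hmove₁ (min T₁ T₂) (lt_min hT₁ hT₂) (min_le_left _ _)
  obtain ⟨hadm₂, hU₂, hgap₂⟩ := hmove₂ (min T₁ T₂) (lt_min hT₁ hT₂) (min_le_right _ _)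
  refine hopt.not_improving hg hlam (hadm₁.add_add_of_disjoint hadm₂ fun c y => ?_) ?_ ?_
  · by_cases h : c = c₁ ∧ y = y₁
    · obtain ⟨rfl, rfl⟩ := h
      exact Or.inr (massMove_apply_of_ne fun ⟨hc, hy⟩ => hne (by rw [hc, hy]))
    · exact Or.inl (massMove_apply_of_ne h)
  · rw [dUtil_add]
    linarith
  · rw [selectionGap_add, hgap₁, hgap₂, ← add_mul, hopp, zero_mul, add_zero]

lemma dOptimal.improvable_dichotomy {g : ℝ → ℝ} {lam : ℝ}
    (hopt : dOptimal Y wA wB a b g lam π) (hg : MonotoneOn g (Set.Ici 0)) (hlam : 0 ≤ lam)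
    (hwA : 0 < wA) (hwB : 0 < wB) :
    (0 ≤ selectionGap Y a b π ∧ ∀ c, ∀ y ∈ Y, Improvable a b π c y → gapDir c y = 1) ∨
    (selectionGap Y a b π ≤ 0 ∧ ∀ c, ∀ y ∈ Y, Improvable a b π c y → gapDir c y = -1) := by
  by_cases h : ∃ c, ∃ y ∈ Y, Improvable a b π c y
  · obtain ⟨c, y, hy, himp⟩ := h
    have hsame : ∀ c', ∀ y' ∈ Y, Improvable a b π c' y' → gapDir c' y' = gapDir c y :=
      fun c' y' hy' himp' => hopt.gapDir_eq_of_improvable hg hlam hwA hwB hy' himp' hy himp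
    have hnonneg := hopt.gapDir_mul_selectionGap_nonneg hg hlam hwA hwB hy himp
    rcases gapDir_eq_one_or_eq_neg_one c himp.ne_zero with h | h <;> rw [h] at hsame hnonneg
    · exact Or.inl ⟨by linarith, hsame⟩
    · exact Or.inr ⟨by linarith, hsame⟩
  · push Not at h
    rcases le_total 0 (selectionGap Y a b π) with hD | hD
    · exact Or.inl ⟨hD, fun c y hy himp => absurd himp (h c y hy)⟩
    · exact Or.inr ⟨hD, fun c y hy himp => absurd himp (h c y hy)⟩

lemma Admissible.saturated_of_not_improvable {c : Bool} {y : ℝ} (hπ : Admissible Y π)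
    (ha : ∀ y ∈ Y, 0 ≤ a y) (hb : ∀ y ∈ Y, 0 ≤ b y) (hy : y ∈ Y) (h : ¬Improvable a b π c y) :
    (0 < y → cond c a b y = 0 ∨ π c y = 1) ∧ (y < 0 → cond c a b y = 0 ∨ π c y = 0) := by
  have hp : 0 ≤ cond c a b y := by cases c; exacts [hb y hy, ha y hy]
  refine ⟨fun hy' => ?_, fun hy' => ?_⟩ <;> by_contra! hne
  · exact h ⟨hp.lt_of_ne' hne.1, Or.inl ⟨hy', (hπ c y hy).2.lt_of_ne hne.2⟩⟩
  · exact h ⟨hp.lt_of_ne' hne.1, Or.inr ⟨hy', (hπ c y hy).1.lt_of_ne' hne.2⟩⟩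

lemma dOptimal.saturation_dichotomy {g : ℝ → ℝ} {lam : ℝ} (hY : ∀ y ∈ Y, y ≠ 0)
    (hopt : dOptimal Y wA wB a b g lam π) (hg : MonotoneOn g (Set.Ici 0)) (hlam : 0 ≤ lam)
    (hwA : 0 < wA) (hwB : 0 < wB) (ha : ∀ y ∈ Y, 0 ≤ a y) (hb : ∀ y ∈ Y, 0 ≤ b y) :
    (0 ≤ selectionGap Y a b π ∧
      ∀ y ∈ Y, (b y = 0 ∨ π false y = 1) ∨ (a y = 0 ∨ π true y = 0)) ∨
    (selectionGap Y a b π ≤ 0 ∧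
      ∀ y ∈ Y, (a y = 0 ∨ π true y = 1) ∨ (b y = 0 ∨ π false y = 0)) := by
  have hsat := fun c y hy => hopt.1.saturated_of_not_improvable (c := c) (y := y) ha hb hy
  rcases hopt.improvable_dichotomy hg hlam hwA hwB with ⟨hD, hdir⟩ | ⟨hD, hdir⟩
  · refine Or.inl ⟨hD, fun y hy => ?_⟩
    rcases (hY y hy).lt_or_gt with hneg | hpos
    · refine Or.inr ((hsat true y hy fun h => ?_).2 hneg)
      exact absurd (hdir true y hy h) (by norm_num [gapDir, Real.sign_of_neg hneg])
    · refine Or.inl ((hsat false y hy fun h => ?_).1 hpos)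
      exact absurd (hdir false y hy h) (by norm_num [gapDir, Real.sign_of_pos hpos])
  · refine Or.inr ⟨hD, fun y hy => ?_⟩
    rcases (hY y hy).lt_or_gt with hneg | hpos
    · refine Or.inr ((hsat false y hy fun h => ?_).2 hneg)
      exact absurd (hdir false y hy h) (by norm_num [gapDir, Real.sign_of_neg hneg])
    · refine Or.inl ((hsat true y hy fun h => ?_).1 hpos)
      exact absurd (hdir true y hy h) (by norm_num [gapDir, Real.sign_of_pos hpos])

lemma dOptimal.two_mul_overlapMismatch_add_dDisp_le {g : ℝ → ℝ} {lam : ℝ} (hY : ∀ y ∈ Y, y ≠ 0)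
    (hopt : dOptimal Y wA wB a b g lam π) (hg : MonotoneOn g (Set.Ici 0)) (hlam : 0 ≤ lam)
    (hwA : 0 < wA) (hwB : 0 < wB) (ha : IsDist Y a) (hb : IsDist Y b) :
    2 * (overlapMismatch Y a b (π true) (π false) + dDisp Y a b π) ≤
      ∑ y ∈ Y, |a y - b y| := by
  rw [dDisp_eq_abs_selectionGap]
  rcases hopt.saturation_dichotomy hY hg hlam hwA hwB ha.1 hb.1 with ⟨hD, hsat⟩ | ⟨hD, hsat⟩
  · have := overlapMismatch_add_sub_le ha.1 hb.1 (hopt.1 true) (hopt.1 false) hsat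
    have htv := two_mul_sum_posPart_sub (ha.2.trans hb.2.symm)
    rw [abs_of_nonneg hD, selectionGap]
    linarith
  · have := overlapMismatch_add_sub_le hb.1 ha.1 (hopt.1 false) (hopt.1 true) hsat
    have htv := two_mul_sum_posPart_sub (hb.2.trans ha.2.symm)
    simp only [abs_sub_comm (b _)] at htv
    rw [overlapMismatch_comm, abs_of_nonpos hD, selectionGap]
    linarith

end OptimalPolicy

def mixKernel (q : ℝ → ℝ → Bool → ℝ) (s : ℝ → ℝ) (y y' : ℝ) : ℝ :=
  s y' * q y y' true + (1 - s y') * q y y' false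

section Contraction

variable {Y : Finset ℝ} {q : ℝ → ℝ → Bool → ℝ} {α : ℝ}

lemma stepDist_eq_sum_mixKernel (r s : ℝ → ℝ) (y : ℝ) :
    stepDist Y q r s y = ∑ y' ∈ Y, r y' * mixKernel q s y y' := rfl

lemma sum_mixKernel (hq : IsKernel Y q) (s : ℝ → ℝ) {y' : ℝ} (hy' : y' ∈ Y) :
    ∑ y ∈ Y, mixKernel q s y y' = 1 := by
  simp only [mixKernel, sum_add_distrib, ← mul_sum, hq.2 y' hy']
  ring

lemma le_mixKernel {s : ℝ → ℝ} {y y' : ℝ} (hq : ∀ d, α ≤ q y y' d)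
    (hs : 0 ≤ s y' ∧ s y' ≤ 1) : α ≤ mixKernel q s y y' := by
  unfold mixKernel
  nlinarith [hq true, hq false]

lemma sum_sub_eq_of_sum_eq_one {K : ℝ → ℝ} (hK : ∑ y ∈ Y, K y = 1) :
    ∑ y ∈ Y, (K y - α) = 1 - α * #Y := by
  rw [sum_sub_distrib, hK, sum_const, nsmul_eq_mul]
  ring

lemma sum_abs_sub_le_of_forall_le {K₁ K₂ : ℝ → ℝ} (hK₁ : ∑ y ∈ Y, K₁ y = 1)
    (hK₂ : ∑ y ∈ Y, K₂ y = 1) (h₁ : ∀ y ∈ Y, α ≤ K₁ y) (h₂ : ∀ y ∈ Y, α ≤ K₂ y) :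
    ∑ y ∈ Y, |K₁ y - K₂ y| ≤ 2 * (1 - α * #Y) :=
  calc ∑ y ∈ Y, |K₁ y - K₂ y| ≤ ∑ y ∈ Y, ((K₁ y - α) + (K₂ y - α)) :=
        sum_le_sum fun y hy => abs_le.2 ⟨by linarith [h₁ y hy], by linarith [h₂ y hy]⟩
    _ = 2 * (1 - α * #Y) := by
        rw [sum_add_distrib, sum_sub_eq_of_sum_eq_one hK₁, sum_sub_eq_of_sum_eq_one hK₂]
        ring

lemma stepDist_sub_stepDist {a b : ℝ → ℝ} (hab : ∑ y ∈ Y, a y = ∑ y ∈ Y, b y)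
    (πA πB : ℝ → ℝ) (y : ℝ) :
    stepDist Y q a πA y - stepDist Y q b πB y =
      ∑ y' ∈ Y, (min (a y') (b y') * (πA y' - πB y') * (q y y' true - q y y' false) +
        ((a y' - b y')⁺ * (mixKernel q πA y y' - α) -
          (a y' - b y')⁻ * (mixKernel q πB y y' - α))) := by
  -- `a = m + (a - b)⁺` and `b = m + (a - b)⁻` with `m = min a b`; the `α`-terms cancel in the sum
  have hterm : ∀ y' ∈ Y, a y' * mixKernel q πA y y' - b y' * mixKernel q πB y y' =
      min (a y') (b y') * (πA y' - πB y') * (q y y' true - q y y' false) +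
        ((a y' - b y')⁺ * (mixKernel q πA y y' - α) -
          (a y' - b y')⁻ * (mixKernel q πB y y' - α)) + α * (a y' - b y') := by
    intro y' _
    have hu : min (a y') (b y') + (a y' - b y')⁺ = a y' := by
      rw [inf_eq_sub_posPart_sub]; ring
    have hv : min (a y') (b y') + (a y' - b y')⁻ = b y' := by
      rw [inf_eq_sub_posPart_sub]; linear_combination -posPart_sub_negPart (a y' - b y')
    have hK : mixKernel q πA y y' - mixKernel q πB y y' =
        (πA y' - πB y') * (q y y' true - q y y' false) := by
      unfold mixKernel; ring
    linear_combination -(mixKernel q πA y y' - α) * hu + (mixKernel q πB y y' - α) * hv +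
      min (a y') (b y') * hK
  rw [stepDist_eq_sum_mixKernel, stepDist_eq_sum_mixKernel, ← sum_sub_distrib,
    sum_congr rfl hterm, sum_add_distrib, ← mul_sum,
    sum_sub_distrib, hab, sub_self, mul_zero, add_zero]

lemma abs_stepDist_sub_le {a b πA πB : ℝ → ℝ} (hα : ∀ y ∈ Y, ∀ y' ∈ Y, ∀ d, α ≤ q y y' d)
    (ha : ∀ y ∈ Y, 0 ≤ a y) (hb : ∀ y ∈ Y, 0 ≤ b y) (hab : ∑ y ∈ Y, a y = ∑ y ∈ Y, b y)
    (hπA : ∀ y ∈ Y, 0 ≤ πA y ∧ πA y ≤ 1) (hπB : ∀ y ∈ Y, 0 ≤ πB y ∧ πB y ≤ 1)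
    {y : ℝ} (hy : y ∈ Y) :
    |stepDist Y q a πA y - stepDist Y q b πB y| ≤
      ∑ y' ∈ Y, (min (a y') (b y') * |πA y' - πB y'| * |q y y' true - q y y' false| +
        ((a y' - b y')⁺ * (mixKernel q πA y y' - α) +
          (a y' - b y')⁻ * (mixKernel q πB y y' - α))) := by
  rw [stepDist_sub_stepDist hab]
  refine (abs_sum_le_sum_abs _ _).trans (sum_le_sum fun y' hy' => ?_)
  have hm : 0 ≤ min (a y') (b y') := le_min (ha y' hy') (hb y' hy')
  have hKA := sub_nonneg.2 (le_mixKernel (hα y hy y' hy') (hπA y' hy'))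
  have hKB := sub_nonneg.2 (le_mixKernel (hα y hy y' hy') (hπB y' hy'))
  refine (abs_add_le _ _).trans (add_le_add ?_ ((abs_sub _ _).trans ?_))
  · rw [abs_mul, abs_mul, abs_of_nonneg hm]
  · rw [abs_of_nonneg (mul_nonneg (posPart_nonneg _) hKA),
      abs_of_nonneg (mul_nonneg (negPart_nonneg _) hKB)]

lemma sum_abs_stepDist_sub_le {a b πA πB : ℝ → ℝ} (hq : IsKernel Y q)
    (hα : ∀ y ∈ Y, ∀ y' ∈ Y, ∀ d, α ≤ q y y' d)
    (ha : ∀ y ∈ Y, 0 ≤ a y) (hb : ∀ y ∈ Y, 0 ≤ b y) (hab : ∑ y ∈ Y, a y = ∑ y ∈ Y, b y)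
    (hπA : ∀ y ∈ Y, 0 ≤ πA y ∧ πA y ≤ 1) (hπB : ∀ y ∈ Y, 0 ≤ πB y ∧ πB y ≤ 1) :
    ∑ y ∈ Y, |stepDist Y q a πA y - stepDist Y q b πB y| ≤
      (1 - α * #Y) * (2 * overlapMismatch Y a b πA πB + ∑ y ∈ Y, |a y - b y|) := by
  have hcol : ∀ s, ∀ y' ∈ Y, ∑ y ∈ Y, (mixKernel q s y y' - α) = 1 - α * #Y :=
    fun s y' hy' => sum_sub_eq_of_sum_eq_one (sum_mixKernel hq s hy')
  calc ∑ y ∈ Y, |stepDist Y q a πA y - stepDist Y q b πB y|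
      ≤ ∑ y ∈ Y, ∑ y' ∈ Y, (min (a y') (b y') * |πA y' - πB y'| * |q y y' true - q y y' false| +
          ((a y' - b y')⁺ * (mixKernel q πA y y' - α) +
            (a y' - b y')⁻ * (mixKernel q πB y y' - α))) :=
        sum_le_sum fun y hy => abs_stepDist_sub_le hα ha hb hab hπA hπB hy
    _ = ∑ y' ∈ Y, (min (a y') (b y') * |πA y' - πB y'| * ∑ y ∈ Y, |q y y' true - q y y' false| +
          ((a y' - b y')⁺ * ∑ y ∈ Y, (mixKernel q πA y y' - α) +
            (a y' - b y')⁻ * ∑ y ∈ Y, (mixKernel q πB y y' - α))) := by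
        rw [sum_comm]
        simp only [sum_add_distrib, mul_sum]
    _ ≤ ∑ y' ∈ Y, (min (a y') (b y') * |πA y' - πB y'| * (2 * (1 - α * #Y)) +
          ((a y' - b y')⁺ * (1 - α * #Y) + (a y' - b y')⁻ * (1 - α * #Y))) := by
        refine sum_le_sum fun y' hy' => ?_
        rw [hcol πA y' hy', hcol πB y' hy']
        gcongr
        · exact mul_nonneg (le_min (ha y' hy') (hb y' hy')) (abs_nonneg _)
        · exact sum_abs_sub_le_of_forall_le (hq.2 y' hy' true) (hq.2 y' hy' false)
            (fun y hy => hα y hy y' hy' true) (fun y hy => hα y hy y' hy' false)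
    _ = (1 - α * #Y) * (2 * overlapMismatch Y a b πA πB + ∑ y ∈ Y, |a y - b y|) := by
        simp only [overlapMismatch, ← posPart_add_negPart, mul_sum, ← sum_add_distrib]
        refine sum_congr rfl fun y' _ => ?_
        ring

lemma IsDist.congr {r r' : ℝ → ℝ} (hr : IsDist Y r) (h : ∀ y ∈ Y, r' y = r y) :
    IsDist Y r' :=
  ⟨fun y hy => (h y hy).symm ▸ hr.1 y hy, (sum_congr rfl h).trans hr.2⟩

lemma IsDist.stepDist {r s : ℝ → ℝ} (hq : IsKernel Y q)
    (hr : IsDist Y r) (hs : ∀ y ∈ Y, 0 ≤ s y ∧ s y ≤ 1) : IsDist Y (stepDist Y q r s) := by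
  refine ⟨fun y hy => sum_nonneg fun y' hy' => ?_, ?_⟩
  · exact mul_nonneg (hr.1 y' hy') (le_mixKernel (hq.1 y hy y' hy') (hs y' hy'))
  · simp only [stepDist_eq_sum_mixKernel]
    rw [sum_comm]
    simp only [← mul_sum]
    rw [sum_congr rfl fun y' hy' => by rw [sum_mixKernel hq s hy', mul_one], hr.2]

lemma Trajectory.isDist {wA wB : ℝ} {g : ℝ → ℝ}
    {lam : ℝ} {pA pB : ℕ → ℝ → ℝ} {πt : ℕ → Bool → ℝ → ℝ}
    (htraj : Trajectory Y q wA wB g lam pA pB πt) (hq : IsKernel Y q)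
    (hA0 : IsDist Y (pA 0)) (hB0 : IsDist Y (pB 0)) (t : ℕ) :
    IsDist Y (pA t) ∧ IsDist Y (pB t) := by
  induction t with
  | zero => exact ⟨hA0, hB0⟩
  | succ t ih =>
    obtain ⟨hopt, hA, hB⟩ := htraj t
    exact ⟨(ih.1.stepDist hq (hopt.1 true)).congr hA, (ih.2.stepDist hq (hopt.1 false)).congr hB⟩

lemma IsKernel.le_of_eq_sInf (hq : IsKernel Y q)
    (hα : α = sInf {x : ℝ | ∃ y ∈ Y, ∃ y' ∈ Y, ∃ d : Bool, x = q y y' d}) :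
    ∀ y ∈ Y, ∀ y' ∈ Y, ∀ d, α ≤ q y y' d := by
  intro y hy y' hy' d
  rw [hα]
  refine csInf_le ⟨0, ?_⟩ ⟨y, hy, y', hy', d, rfl⟩
  rintro x ⟨z, hz, z', hz', d', rfl⟩
  exact hq.1 z hz z' hz' d'

lemma IsKernel.mul_card_le_one (hq : IsKernel Y q) (hα : ∀ y ∈ Y, ∀ y' ∈ Y, ∀ d, α ≤ q y y' d) :
    α * #Y ≤ 1 := by
  rcases Y.eq_empty_or_nonempty with rfl | ⟨y', hy'⟩
  · simp
  calc α * #Y = ∑ _y ∈ Y, α := by rw [sum_const, nsmul_eq_mul, mul_comm]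
    _ ≤ ∑ y ∈ Y, q y y' true := sum_le_sum fun y hy => hα y hy y' hy' true
    _ = 1 := hq.2 y' hy' true

end Contraction

lemma dOptimal.sum_abs_stepDist_sub_le_two_mul {Y : Finset ℝ} {q : ℝ → ℝ → Bool → ℝ} {α : ℝ}
    {wA wB : ℝ} {a b : ℝ → ℝ} {π : Bool → ℝ → ℝ} {g : ℝ → ℝ} {lam : ℝ} (hY : ∀ y ∈ Y, y ≠ 0)
    (hq : IsKernel Y q) (hα : ∀ y ∈ Y, ∀ y' ∈ Y, ∀ d, α ≤ q y y' d)
    (hopt : dOptimal Y wA wB a b g lam π) (hg : MonotoneOn g (Set.Ici 0)) (hlam : 0 ≤ lam)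
    (hwA : 0 < wA) (hwB : 0 < wB) (ha : IsDist Y a) (hb : IsDist Y b) :
    ∑ y ∈ Y, |stepDist Y q a (π true) y - stepDist Y q b (π false) y| ≤
      2 * (1 - α * #Y) * ∑ y ∈ Y, |a y - b y| := by
  have hkey := hopt.two_mul_overlapMismatch_add_dDisp_le hY hg hlam hwA hwB ha hb
  have hdisp : 0 ≤ dDisp Y a b π := abs_nonneg _
  calc _ ≤ (1 - α * #Y) * (2 * overlapMismatch Y a b (π true) (π false) +
        ∑ y ∈ Y, |a y - b y|) :=
        sum_abs_stepDist_sub_le hq hα ha.1 hb.1 (ha.2.trans hb.2.symm) (hopt.1 true) (hopt.1 false)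
    _ ≤ (1 - α * #Y) * (∑ y ∈ Y, |a y - b y| + ∑ y ∈ Y, |a y - b y|) :=
        mul_le_mul_of_nonneg_left (by linarith) (by linarith [hq.mul_card_le_one hα])
    _ = 2 * (1 - α * #Y) * ∑ y ∈ Y, |a y - b y| := by ring

lemma dOptimal.dDisp_le {Y : Finset ℝ} {wA wB : ℝ} {a b : ℝ → ℝ} {π : Bool → ℝ → ℝ}
    {g : ℝ → ℝ} {lam : ℝ} (hY : ∀ y ∈ Y, y ≠ 0) (hopt : dOptimal Y wA wB a b g lam π)
    (hg : MonotoneOn g (Set.Ici 0)) (hlam : 0 ≤ lam) (hwA : 0 < wA) (hwB : 0 < wB)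
    (ha : IsDist Y a) (hb : IsDist Y b) :
    dDisp Y a b π ≤ ∑ y ∈ Y, |a y - b y| := by
  have := hopt.two_mul_overlapMismatch_add_dDisp_le hY hg hlam hwA hwB ha hb
  have := overlapMismatch_nonneg ha.1 hb.1 (π true) (π false)
  have : 0 ≤ dDisp Y a b π := abs_nonneg _
  linarith

theorem stmt_12_general (Y : Finset ℝ) (hY : ∀ y ∈ Y, y ≠ 0)
    (q : ℝ → ℝ → Bool → ℝ) (hq : IsKernel Y q)
    (wA wB : ℝ) (hwA : 0 < wA) (hwB : 0 < wB)
    (g : ℝ → ℝ) (hg : AdmissiblePenalty g) (lam : ℝ) (hlam : 0 ≤ lam)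
    (pA pB : ℕ → ℝ → ℝ) (πt : ℕ → Bool → ℝ → ℝ)
    (hA0 : IsDist Y (pA 0)) (hB0 : IsDist Y (pB 0))
    (htraj : Trajectory Y q wA wB g lam pA pB πt)
    (α : ℝ)
    (hα : α = sInf {x : ℝ | ∃ y ∈ Y, ∃ y' ∈ Y, ∃ d : Bool, x = q y y' d}) :
    (∀ t, ∑ y ∈ Y, |pA (t + 1) y - pB (t + 1) y| ≤
        2 * (1 - α * Y.card) * ∑ y ∈ Y, |pA t y - pB t y|) ∧
    (1 / (2 * Y.card) < α →
      Tendsto (fun t => ∑ y ∈ Y, |pA t y - pB t y|) atTop (𝓝 0) ∧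
      Tendsto (fun t => dDisp Y (pA t) (pB t) (πt t)) atTop (𝓝 0)) := by
  have hdist := htraj.isDist hq hA0 hB0
  have hfloor := hq.le_of_eq_sInf hα
  have hαY := hq.mul_card_le_one hfloor
  have hcontract : ∀ t, ∑ y ∈ Y, |pA (t + 1) y - pB (t + 1) y| ≤
      2 * (1 - α * #Y) * ∑ y ∈ Y, |pA t y - pB t y| := fun t => by
    obtain ⟨hopt, hA, hB⟩ := htraj t
    rw [sum_congr rfl fun y hy => by rw [hA y hy, hB y hy]]
    exact hopt.sum_abs_stepDist_sub_le_two_mul hY hq hfloor hg.2.1 hlam hwA hwB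
      (hdist t).1 (hdist t).2
  refine ⟨hcontract, fun hbig => ?_⟩
  have hhalf : 1 / 2 < α * #Y := by
    rcases Y.eq_empty_or_nonempty with rfl | hne
    · -- for `Y = ∅` the hypothesis reads `1 / 0 = 0 < sInf ∅ = 0`
      simp [hα] at hbig
    · rwa [div_lt_iff₀ (by positivity), mul_comm 2, ← mul_assoc, ← div_lt_iff₀ two_pos] at hbig
  have hTV : Tendsto (fun t => ∑ y ∈ Y, |pA t y - pB t y|) atTop (𝓝 0) :=
    tendsto_zero_of_le_mul (fun t => sum_nonneg fun y _ => abs_nonneg _) (by linarith)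
      (by linarith) hcontract
  refine ⟨hTV, squeeze_zero (fun t => abs_nonneg _) (fun t => ?_) hTV⟩
  exact (htraj t).1.dDisp_le hY hg.2.1 hlam hwA hwB (hdist t).1 (hdist t).2

/-- Contraction under fast mixing. With `α = min_{y,y',d} q(y|y',d)`,
along any trajectory of the myopic dynamics the total-variation gap contracts by the
factor `2(1 − α|Y|)`; in particular if `α > 1/(2|Y|)` both the gap and the disparity
`Δ_t` tend to `0`. -/
theorem stmt_12 (Y : Finset ℝ) (hY : ∀ y ∈ Y, y ≠ 0)
    (q : ℝ → ℝ → Bool → ℝ) (hq : IsKernel Y q)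
    (wA wB : ℝ) (hwA : 0 < wA) (hwB : 0 < wB) (hw : wA + wB = 1)
    (g : ℝ → ℝ) (hg : AdmissiblePenalty g) (lam : ℝ) (hlam : 0 ≤ lam)
    (pA pB : ℕ → ℝ → ℝ) (πt : ℕ → Bool → ℝ → ℝ)
    (hA0 : IsDist Y (pA 0)) (hB0 : IsDist Y (pB 0))
    (htraj : Trajectory Y q wA wB g lam pA pB πt)
    (α : ℝ)
    (hα : α = sInf {x : ℝ | ∃ y ∈ Y, ∃ y' ∈ Y, ∃ d : Bool, x = q y y' d}) :
    (∀ t, ∑ y ∈ Y, |pA (t + 1) y - pB (t + 1) y| ≤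
        2 * (1 - α * Y.card) * ∑ y ∈ Y, |pA t y - pB t y|) ∧
    (1 / (2 * Y.card) < α →
      Tendsto (fun t => ∑ y ∈ Y, |pA t y - pB t y|) atTop (𝓝 0) ∧
      Tendsto (fun t => dDisp Y (pA t) (pB t) (πt t)) atTop (𝓝 0)) :=
  stmt_12_general Y hY q hq wA wB hwA hwB g hg lam hlam pA pB πt hA0 hB0 htraj α hα
end
end

section
/- (Monotone profit.) Assume that selection improves qualifications on average: ∑_{y'} y'·q(y'|y,1) ≥ y for every y ∈ 𝒴 (no assumption is made on q(·|y,0)). Then for any λ ≥ 0, any nondecreasing nonnegative convex g with g(0)=0, and any initial distributions p_0(y|c), the optimal objective value Profit(t) = max_π J_t(π) is a non-decreasing function of t along the myopic dynamics. -/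
/-!
Dynamic setting: `Y` is a finite set of nonzero real qualifications; groups `A`/`B`
are encoded as `true`/`false` with weights `wA`/`wB`; `q y y' d` is the probability
of moving to qualification `y` from `y'` under decision `d`; `pA t`/`pB t` are the
group qualification distributions at time `t`, and at every step the institution
uses a myopic maximizer of the penalized objective.
-/

open Finset Filter Topology
open scoped Classical

noncomputable section

/-!
Profit can only grow because the policy of time `t` can be imitated at time `t + 1`: at each
qualification `y` select exactly the individuals who were selected at time `t`, i.e. the fraction
`(∑_{y'} p_t(y') π_t(y') q(y|y',1)) / p_{t+1}(y)`. Each group keeps its acceptance rate, so the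
disparity penalty is unchanged, while the expected qualification of the selected individuals
does not decrease because selection improves qualifications on average. The myopic optimal
policy of time `t + 1` does at least as well as this imitation.
-/

section OneGroup

variable {Y : Finset ℝ} {q : ℝ → ℝ → Bool → ℝ} {r sel : ℝ → ℝ}

/-- The mass at `y` after one step of the individuals that were selected. -/
def selectedMass (Y : Finset ℝ) (q : ℝ → ℝ → Bool → ℝ) (r sel : ℝ → ℝ) (y : ℝ) : ℝ :=
  ∑ y' ∈ Y, r y' * sel y' * q y y' true

/-- Where `stepDist` vanishes so does `selectedMass`, and the division returns `0`. -/
def inheritedSel (Y : Finset ℝ) (q : ℝ → ℝ → Bool → ℝ) (r sel : ℝ → ℝ) (y : ℝ) : ℝ :=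
  selectedMass Y q r sel y / stepDist Y q r sel y

def inheritedPolicy (Y : Finset ℝ) (q : ℝ → ℝ → Bool → ℝ) (pA pB : ℝ → ℝ)
    (π : Bool → ℝ → ℝ) : Bool → ℝ → ℝ :=
  fun c => inheritedSel Y q (cond c pA pB) (π c)

lemma selectedMass_nonneg (hq : IsKernel Y q) (hr : ∀ y ∈ Y, 0 ≤ r y)
    (hsel : ∀ y ∈ Y, 0 ≤ sel y ∧ sel y ≤ 1) {y : ℝ} (hy : y ∈ Y) :
    0 ≤ selectedMass Y q r sel y :=
  sum_nonneg fun y' hy' =>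
    mul_nonneg (mul_nonneg (hr y' hy') (hsel y' hy').1) (hq.1 y hy y' hy' true)

lemma selectedMass_le_stepDist (hq : IsKernel Y q) (hr : ∀ y ∈ Y, 0 ≤ r y)
    (hsel : ∀ y ∈ Y, 0 ≤ sel y ∧ sel y ≤ 1) {y : ℝ} (hy : y ∈ Y) :
    selectedMass Y q r sel y ≤ stepDist Y q r sel y := by
  refine sum_le_sum fun y' hy' => ?_
  have hrest : 0 ≤ r y' * ((1 - sel y') * q y y' false) :=
    mul_nonneg (hr y' hy') (mul_nonneg (by linarith [(hsel y' hy').2]) (hq.1 y hy y' hy' false))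
  linarith

lemma stepDist_nonneg (hq : IsKernel Y q) (hr : ∀ y ∈ Y, 0 ≤ r y)
    (hsel : ∀ y ∈ Y, 0 ≤ sel y ∧ sel y ≤ 1) {y : ℝ} (hy : y ∈ Y) :
    0 ≤ stepDist Y q r sel y :=
  (selectedMass_nonneg hq hr hsel hy).trans (selectedMass_le_stepDist hq hr hsel hy)

lemma inheritedSel_mem (hq : IsKernel Y q) (hr : ∀ y ∈ Y, 0 ≤ r y)
    (hsel : ∀ y ∈ Y, 0 ≤ sel y ∧ sel y ≤ 1) {y : ℝ} (hy : y ∈ Y) :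
    0 ≤ inheritedSel Y q r sel y ∧ inheritedSel Y q r sel y ≤ 1 :=
  ⟨div_nonneg (selectedMass_nonneg hq hr hsel hy) (stepDist_nonneg hq hr hsel hy),
    div_le_one_of_le₀ (selectedMass_le_stepDist hq hr hsel hy) (stepDist_nonneg hq hr hsel hy)⟩

lemma stepDist_mul_inheritedSel (hq : IsKernel Y q) (hr : ∀ y ∈ Y, 0 ≤ r y)
    (hsel : ∀ y ∈ Y, 0 ≤ sel y ∧ sel y ≤ 1) {y : ℝ} (hy : y ∈ Y) :
    stepDist Y q r sel y * inheritedSel Y q r sel y = selectedMass Y q r sel y := by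
  by_cases h : stepDist Y q r sel y = 0
  · have hzero : selectedMass Y q r sel y = 0 :=
      le_antisymm (h ▸ selectedMass_le_stepDist hq hr hsel hy) (selectedMass_nonneg hq hr hsel hy)
    simp [h, hzero]
  · exact mul_div_cancel₀ _ h

lemma sum_selectedMass (hq : IsKernel Y q) :
    ∑ y ∈ Y, selectedMass Y q r sel y = ∑ y ∈ Y, r y * sel y := by
  unfold selectedMass
  rw [sum_comm]
  refine sum_congr rfl fun y' hy' => ?_
  rw [← mul_sum, hq.2 y' hy' true, mul_one]

lemma sum_mul_self_le_sum_selectedMass_mul_self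
    (hgrow : ∀ y ∈ Y, y ≤ ∑ y' ∈ Y, y' * q y' y true) (hr : ∀ y ∈ Y, 0 ≤ r y)
    (hsel : ∀ y ∈ Y, 0 ≤ sel y ∧ sel y ≤ 1) :
    ∑ y ∈ Y, r y * y * sel y ≤ ∑ y ∈ Y, selectedMass Y q r sel y * y := by
  simp only [selectedMass, sum_mul]
  rw [sum_comm]
  refine sum_le_sum fun y' hy' => ?_
  calc r y' * y' * sel y' = r y' * sel y' * y' := by ring
    _ ≤ r y' * sel y' * ∑ y ∈ Y, y * q y y' true :=
        mul_le_mul_of_nonneg_left (hgrow y' hy') (mul_nonneg (hr y' hy') (hsel y' hy').1)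
    _ = ∑ y ∈ Y, r y' * sel y' * q y y' true * y := by
        rw [mul_sum]; exact sum_congr rfl fun _ _ => by ring

lemma sum_stepDist_mul_inheritedSel (hq : IsKernel Y q) (hr : ∀ y ∈ Y, 0 ≤ r y)
    (hsel : ∀ y ∈ Y, 0 ≤ sel y ∧ sel y ≤ 1) {r' : ℝ → ℝ}
    (hr' : ∀ y ∈ Y, r' y = stepDist Y q r sel y) :
    ∑ y ∈ Y, r' y * inheritedSel Y q r sel y = ∑ y ∈ Y, r y * sel y := by
  rw [← sum_selectedMass (r := r) (sel := sel) hq]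
  exact sum_congr rfl fun y hy => by rw [hr' y hy, stepDist_mul_inheritedSel hq hr hsel hy]

lemma sum_mul_self_le_sum_stepDist_mul_self_inheritedSel (hq : IsKernel Y q)
    (hgrow : ∀ y ∈ Y, y ≤ ∑ y' ∈ Y, y' * q y' y true) (hr : ∀ y ∈ Y, 0 ≤ r y)
    (hsel : ∀ y ∈ Y, 0 ≤ sel y ∧ sel y ≤ 1) {r' : ℝ → ℝ}
    (hr' : ∀ y ∈ Y, r' y = stepDist Y q r sel y) :
    ∑ y ∈ Y, r y * y * sel y ≤ ∑ y ∈ Y, r' y * y * inheritedSel Y q r sel y := by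
  refine (sum_mul_self_le_sum_selectedMass_mul_self hgrow hr hsel).trans_eq
    (sum_congr rfl fun y hy => ?_)
  rw [hr' y hy, mul_right_comm, stepDist_mul_inheritedSel hq hr hsel hy]

end OneGroup

variable {Y : Finset ℝ} {q : ℝ → ℝ → Bool → ℝ}

lemma inheritedPolicy_admissible (hq : IsKernel Y q) {pA pB : ℝ → ℝ} {π : Bool → ℝ → ℝ}
    (hA : ∀ y ∈ Y, 0 ≤ pA y) (hB : ∀ y ∈ Y, 0 ≤ pB y) (hπ : Admissible Y π) :
    Admissible Y (inheritedPolicy Y q pA pB π) := by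
  rintro (_ | _) y hy
  exacts [inheritedSel_mem hq hB (hπ false) hy, inheritedSel_mem hq hA (hπ true) hy]

lemma dObj_le_dObj_inheritedPolicy (hq : IsKernel Y q)
    (hgrow : ∀ y ∈ Y, y ≤ ∑ y' ∈ Y, y' * q y' y true) {wA wB : ℝ} (hwA : 0 ≤ wA)
    (hwB : 0 ≤ wB) (g : ℝ → ℝ) (lam : ℝ) {pA pB pA' pB' : ℝ → ℝ} {π : Bool → ℝ → ℝ}
    (hA : ∀ y ∈ Y, 0 ≤ pA y) (hB : ∀ y ∈ Y, 0 ≤ pB y) (hπ : Admissible Y π)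
    (hA' : ∀ y ∈ Y, pA' y = stepDist Y q pA (π true) y)
    (hB' : ∀ y ∈ Y, pB' y = stepDist Y q pB (π false) y) :
    dObj Y wA wB pA pB g lam π ≤ dObj Y wA wB pA' pB' g lam (inheritedPolicy Y q pA pB π) := by
  have hdisp : dDisp Y pA' pB' (inheritedPolicy Y q pA pB π) = dDisp Y pA pB π := by
    simp only [dDisp, inheritedPolicy, cond_true, cond_false,
      sum_stepDist_mul_inheritedSel hq hA (hπ true) hA',
      sum_stepDist_mul_inheritedSel hq hB (hπ false) hB']
  have hutil : dUtil Y wA wB pA pB π ≤ dUtil Y wA wB pA' pB' (inheritedPolicy Y q pA pB π) :=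
    add_le_add
      (mul_le_mul_of_nonneg_left
        (sum_mul_self_le_sum_stepDist_mul_self_inheritedSel hq hgrow hA (hπ true) hA') hwA)
      (mul_le_mul_of_nonneg_left
        (sum_mul_self_le_sum_stepDist_mul_self_inheritedSel hq hgrow hB (hπ false) hB') hwB)
  simp only [dObj, hdisp]
  linarith

lemma Trajectory.nonneg (hq : IsKernel Y q) {wA wB lam : ℝ} {g : ℝ → ℝ}
    {pA pB : ℕ → ℝ → ℝ} {πt : ℕ → Bool → ℝ → ℝ}
    (htraj : Trajectory Y q wA wB g lam pA pB πt)
    (hA0 : ∀ y ∈ Y, 0 ≤ pA 0 y) (hB0 : ∀ y ∈ Y, 0 ≤ pB 0 y) (t : ℕ) :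
    (∀ y ∈ Y, 0 ≤ pA t y) ∧ ∀ y ∈ Y, 0 ≤ pB t y := by
  induction t with
  | zero => exact ⟨hA0, hB0⟩
  | succ t ih =>
    obtain ⟨⟨hπ, -⟩, hA, hB⟩ := htraj t
    exact ⟨fun y hy => hA y hy ▸ stepDist_nonneg hq ih.1 (hπ true) hy,
      fun y hy => hB y hy ▸ stepDist_nonneg hq ih.2 (hπ false) hy⟩

theorem stmt_13_general (Y : Finset ℝ)
    (q : ℝ → ℝ → Bool → ℝ) (hq : IsKernel Y q)
    (hgrow : ∀ y ∈ Y, y ≤ ∑ y' ∈ Y, y' * q y' y true)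
    (wA wB : ℝ) (hwA : 0 < wA) (hwB : 0 < wB)
    (g : ℝ → ℝ) (lam : ℝ)
    (pA pB : ℕ → ℝ → ℝ) (πt : ℕ → Bool → ℝ → ℝ)
    (hA0 : IsDist Y (pA 0)) (hB0 : IsDist Y (pB 0))
    (htraj : Trajectory Y q wA wB g lam pA pB πt) :
    Monotone (fun t => dObj Y wA wB (pA t) (pB t) g lam (πt t)) := by
  refine monotone_nat_of_le_succ fun t => ?_
  obtain ⟨hA, hB⟩ := htraj.nonneg hq hA0.1 hB0.1 t
  obtain ⟨⟨hπ, -⟩, hA', hB'⟩ := htraj t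
  obtain ⟨⟨-, hopt⟩, -⟩ := htraj (t + 1)
  calc dObj Y wA wB (pA t) (pB t) g lam (πt t)
      ≤ dObj Y wA wB (pA (t + 1)) (pB (t + 1)) g lam (inheritedPolicy Y q (pA t) (pB t) (πt t)) :=
        dObj_le_dObj_inheritedPolicy hq hgrow hwA.le hwB.le g lam hA hB hπ hA' hB'
    _ ≤ dObj Y wA wB (pA (t + 1)) (pB (t + 1)) g lam (πt (t + 1)) :=
        hopt _ (inheritedPolicy_admissible hq hA hB hπ)

/-- Monotone profit. If selection improves qualifications on
average, i.e. `∑_{y'} y'·q(y'|y,1) ≥ y` for every `y ∈ Y`, then along any trajectory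
of the myopic dynamics the optimal objective value `Profit(t) = max_π J_t(π)` is
non-decreasing in `t`. -/
theorem stmt_13 (Y : Finset ℝ) (hY : ∀ y ∈ Y, y ≠ 0)
    (q : ℝ → ℝ → Bool → ℝ) (hq : IsKernel Y q)
    (hgrow : ∀ y ∈ Y, y ≤ ∑ y' ∈ Y, y' * q y' y true)
    (wA wB : ℝ) (hwA : 0 < wA) (hwB : 0 < wB) (hw : wA + wB = 1)
    (g : ℝ → ℝ) (hg : AdmissiblePenalty g) (lam : ℝ) (hlam : 0 ≤ lam)
    (pA pB : ℕ → ℝ → ℝ) (πt : ℕ → Bool → ℝ → ℝ)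
    (hA0 : IsDist Y (pA 0)) (hB0 : IsDist Y (pB 0))
    (htraj : Trajectory Y q wA wB g lam pA pB πt) :
    Monotone (fun t => dObj Y wA wB (pA t) (pB t) g lam (πt t)) :=
  stmt_13_general Y q hq hgrow wA wB hwA hwB g lam pA pB πt hA0 hB0 htraj
end
end
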